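/- arXiv:1301.2125 — 9 statements merged into one kernel-verified Lean document; each statement's English description precedes it below -/
import Mathlib

section
/- For s a positive integer and ν a complex number with q^{ν+k} ≠ 1 for all nonnegative integers k, the series ∑_{k=0}^{∞} q^{sk} / (q^{ν+k}; q)_{s+1} converges and equals 1 / ((1 - q^s) (q^{ν}; q)_s). -/
/-!
Write `a_k = q^ν q^k`. Because `(a; q)_{s+1} = (a; q)_s (1 - a q^s) = (1 - a) (a q; q)_s`, the
summand telescopes: `q^{sk} / (a_k; q)_{s+1} = b_k - b_{k+1}` with
`b_k = q^{sk} / ((1 - q^s) (a_k; q)_s)`. As `a_k → 0`, the `q`-Pochhammer symbols tend to `1`, so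
the series is dominated by the geometric series in `q^s`, `b_k → 0`, and the sum is `b_0`.
-/

open Filter Finset Topology

/-- The `q`-Pochhammer symbol `(a; q)_m`. -/
def qPochhammer {R : Type*} [CommRing R] (a q : R) (m : ℕ) : R :=
  ∏ j ∈ range m, (1 - a * q ^ j)

section CommRing

variable {R : Type*} [CommRing R]

theorem qPochhammer_succ (a q : R) (m : ℕ) :
    qPochhammer a q (m + 1) = qPochhammer a q m * (1 - a * q ^ m) :=
  prod_range_succ _ _

theorem qPochhammer_succ' (a q : R) (m : ℕ) :
    qPochhammer a q (m + 1) = (1 - a) * qPochhammer (a * q) q m := by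
  simp only [qPochhammer, prod_range_succ', pow_zero, mul_one, pow_succ, mul_assoc, mul_comm q]
  ring

theorem qPochhammer_ne_zero [IsDomain R] {a q : R} {m : ℕ} (h : ∀ j < m, a * q ^ j ≠ 1) :
    qPochhammer a q m ≠ 0 :=
  prod_ne_zero_iff.2 fun j hj => sub_ne_zero.2 (h j (mem_range.1 hj)).symm

theorem tendsto_qPochhammer_one [TopologicalSpace R] [IsTopologicalRing R] {ι : Type*}
    {l : Filter ι} {a : ι → R} (ha : Tendsto a l (𝓝 0)) (q : R) (m : ℕ) :
    Tendsto (fun i => qPochhammer (a i) q m) l (𝓝 1) := by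
  have hc : Continuous fun a => qPochhammer a q m := by unfold qPochhammer; fun_prop
  simpa [qPochhammer, Function.comp_def] using (hc.tendsto 0).comp ha

end CommRing

theorem inv_qPochhammer_succ_eq_sub {K : Type*} [Field K] {a q : K} {s : ℕ} (hq : q ^ s ≠ 1)
    (ha : qPochhammer a q (s + 1) ≠ 0) :
    (qPochhammer a q (s + 1))⁻¹ =
      ((1 - q ^ s) * qPochhammer a q s)⁻¹ - q ^ s * ((1 - q ^ s) * qPochhammer (a * q) q s)⁻¹ := by
  have hq' : 1 - q ^ s ≠ 0 := sub_ne_zero.2 hq.symm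
  have hA : qPochhammer a q s ≠ 0 := left_ne_zero_of_mul (qPochhammer_succ a q s ▸ ha)
  have hB : qPochhammer (a * q) q s ≠ 0 := right_ne_zero_of_mul (qPochhammer_succ' a q s ▸ ha)
  field_simp
  linear_combination q ^ s * qPochhammer a q s * qPochhammer_succ' a q s -
    qPochhammer (a * q) q s * qPochhammer_succ a q s

theorem Summable.hasSum_of_eq_sub_succ {G : Type*} [AddCommGroup G] [TopologicalSpace G]
    [IsTopologicalAddGroup G] [T2Space G] {f b : ℕ → G} (hf : Summable f)
    (hfb : ∀ k, f k = b k - b (k + 1)) (hb : Tendsto b atTop (𝓝 0)) : HasSum f (b 0) := by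
  rw [hf.hasSum_iff_tendsto_nat]
  simp only [hfb, sum_range_sub']
  simpa using tendsto_const_nhds.sub hb

theorem hasSum_pow_div_qPochhammer {𝕜 : Type*} [NormedField 𝕜] [CompleteSpace 𝕜] {x q : 𝕜}
    (hq : ‖q‖ < 1) {s : ℕ} (hs : s ≠ 0) (hx : ∀ n : ℕ, x * q ^ n ≠ 1) :
    HasSum (fun k : ℕ => q ^ (s * k) / qPochhammer (x * q ^ k) q (s + 1))
      (1 / ((1 - q ^ s) * qPochhammer x q s)) := by
  have hqs : ‖q ^ s‖ < 1 := norm_pow q s ▸ pow_lt_one₀ (norm_nonneg q) hq hs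
  have hqs1 : q ^ s ≠ 1 := fun h => by simp [h] at hqs
  have hP : ∀ k m : ℕ, qPochhammer (x * q ^ k) q m ≠ 0 := fun k m =>
    qPochhammer_ne_zero fun j _ => by rw [mul_assoc, ← pow_add]; exact hx _
  have hxq : Tendsto (fun k : ℕ => x * q ^ k) atTop (𝓝 0) := by
    simpa using (tendsto_pow_atTop_nhds_zero_of_norm_lt_one hq).const_mul x
  set b : ℕ → 𝕜 := fun k => (q ^ s) ^ k * ((1 - q ^ s) * qPochhammer (x * q ^ k) q s)⁻¹
  have hsum : Summable fun k : ℕ => q ^ (s * k) / qPochhammer (x * q ^ k) q (s + 1) := by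
    simp only [pow_mul, div_eq_mul_inv]
    refine (summable_norm_geometric_of_norm_lt_one hqs).mul_tendsto_const (c := 1) ?_
    simpa [Nat.cofinite_eq_atTop] using (tendsto_qPochhammer_one hxq q (s + 1)).inv₀ one_ne_zero
  have hstep : ∀ k, q ^ (s * k) / qPochhammer (x * q ^ k) q (s + 1) = b k - b (k + 1) := by
    intro k
    rw [div_eq_mul_inv, inv_qPochhammer_succ_eq_sub hqs1 (hP k _), mul_assoc, ← pow_succ]
    ring
  have hb : Tendsto b atTop (𝓝 0) := by
    have hqs1' : 1 - q ^ s ≠ 0 := sub_ne_zero.2 hqs1.symm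
    simpa [b, mul_inv] using (tendsto_pow_atTop_nhds_zero_of_norm_lt_one hqs).mul
      (((tendsto_qPochhammer_one hxq q s).const_mul (1 - q ^ s)).inv₀ (by simpa using hqs1'))
  simpa [b] using hsum.hasSum_of_eq_sub_succ hstep hb

theorem qsum_pochhammer (q : ℝ) (hq0 : 0 < q) (hq1 : q < 1) (s : ℕ) (hs : 0 < s) (ν : ℂ)
    (hν : ∀ k : ℕ, (q : ℂ) ^ (ν + (k : ℂ)) ≠ 1) :
    HasSum (fun k : ℕ => (q : ℂ) ^ (s * k) /
        ∏ j ∈ Finset.range (s + 1), (1 - (q : ℂ) ^ (ν + (k : ℂ)) * (q : ℂ) ^ j))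
      (1 / ((1 - (q : ℂ) ^ s) * ∏ j ∈ Finset.range s, (1 - (q : ℂ) ^ ν * (q : ℂ) ^ j))) := by
  have hq : ‖(q : ℂ)‖ < 1 := by rwa [Complex.norm_real, Real.norm_of_nonneg hq0.le]
  have hcpow : ∀ k : ℕ, (q : ℂ) ^ (ν + (k : ℂ)) = (q : ℂ) ^ ν * (q : ℂ) ^ k := fun k => by
    rw [Complex.cpow_add _ _ (by exact_mod_cast hq0.ne'), Complex.cpow_natCast]
  simp only [hcpow] at hν ⊢
  exact hasSum_pow_div_qPochhammer hq hs.ne' hν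
end

section
/- For y > 0 and z complex with 1 - 4z not a nonpositive real (so the square root is well defined), the infinite product ∏_{k=0}^{∞} (1 + z/((y+k)(y+k+1))) converges and equals Γ(y)Γ(y+1) / (Γ(1/2 + y - (1/2)√(1-4z)) Γ(1/2 + y + (1/2)√(1-4z))). -/
/-! With `a, b = 1/2 + y ∓ √(1 - 4z)/2` the numerator factors as
`(y + k)(y + k + 1) + z = (a + k)(b + k)`, and `a + b = y + (y + 1)`. For any such balanced
quadruple the `n`-th partial product of `(a + k)(b + k) / ((c + k)(d + k))` is the quotient of
Euler's finite products `GammaSeq c n * GammaSeq d n / (GammaSeq a n * GammaSeq b n)`: the powers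
`n ^ s` cancel because `a + b = c + d`. The factors are `1 + O(k⁻²)`, so the product converges
unconditionally, and its value follows from `GammaSeq s n → Γ(s)`. When `a` or `b` is a pole of `Γ`
a factor vanishes, and both sides are `0` (the right-hand side through `x / 0 = 0`). -/

open Filter Asymptotics Finset Topology

namespace Complex

lemma summable_norm_div_mul_add_natCast (w c d : ℂ) :
    Summable fun k : ℕ => ‖w / ((c + k) * (d + k))‖ := by
  have hk : Tendsto (norm ∘ fun k : ℕ => (k : ℂ)) atTop atTop := by
    simpa [Function.comp_def] using tendsto_natCast_atTop_atTop
  have hequiv : (fun k : ℕ => w / ((c + k) * (d + k))) ~[atTop] fun k => w / (k : ℂ) ^ 2 := by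
    simp only [div_eq_mul_inv, sq]
    exact (IsEquivalent.refl.const_add_of_norm_tendsto_atTop hk).mul
      (IsEquivalent.refl.const_add_of_norm_tendsto_atTop hk) |>.inv |> IsEquivalent.refl.mul
  refine summable_of_isBigO_nat ?_ hequiv.isBigO.norm_norm
  simpa using summable_pow_div_add w 2 0 one_lt_two

lemma prod_range_mul_add_natCast_div_eq_GammaSeq {a b c d : ℂ} (h : a + b = c + d) {n : ℕ}
    (hn : n ≠ 0) :
    ∏ k ∈ range (n + 1), (a + k) * (b + k) / ((c + k) * (d + k)) =
      GammaSeq c n * GammaSeq d n / (GammaSeq a n * GammaSeq b n) := by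
  have hn' : (n : ℂ) ≠ 0 := Nat.cast_ne_zero.mpr hn
  have hpow : (n : ℂ) ^ c * (n : ℂ) ^ d = (n : ℂ) ^ a * (n : ℂ) ^ b := by
    rw [← cpow_add _ _ hn', ← cpow_add _ _ hn', h]
  have hpow0 : (n : ℂ) ^ a * (n : ℂ) ^ b ≠ 0 := by
    simp [cpow_eq_zero_iff, hn']
  have hfact : (n.factorial : ℂ) ≠ 0 := Nat.cast_ne_zero.mpr n.factorial_ne_zero
  simp only [GammaSeq, prod_div_distrib, prod_mul_distrib]
  field_simp
  rw [mul_assoc _ (_ ^ c), hpow, mul_assoc _ (_ ^ a), mul_div_mul_right _ _ hpow0]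

theorem hasProd_mul_add_natCast_div_mul_add_natCast {a b c d : ℂ} (h : a + b = c + d)
    (hc : ∀ k : ℕ, c + k ≠ 0) (hd : ∀ k : ℕ, d + k ≠ 0) :
    HasProd (fun k : ℕ => (a + k) * (b + k) / ((c + k) * (d + k)))
      (Gamma c * Gamma d / (Gamma a * Gamma b)) := by
  by_cases hGamma : Gamma a * Gamma b = 0
  · rw [hGamma, div_zero]
    rcases mul_eq_zero.mp hGamma with hΓ | hΓ <;> obtain ⟨m, hm⟩ := (Gamma_eq_zero_iff _).mp hΓ <;>
      exact hasProd_zero_of_exists_eq_zero ⟨m, by simp [hm]⟩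
  have hterm : ∀ k : ℕ, (a + k) * (b + k) / ((c + k) * (d + k)) =
      1 + (a * b - c * d) / ((c + k) * (d + k)) := fun k => by
    rw [one_add_div (mul_ne_zero (hc k) (hd k))]
    congr 1
    linear_combination (k : ℂ) * h
  have hmult : Multipliable fun k : ℕ => (a + k) * (b + k) / ((c + k) * (d + k)) := by
    simpa only [hterm] using
      multipliable_one_add_of_summable (summable_norm_div_mul_add_natCast (a * b - c * d) c d)
  rw [hmult.hasProd_iff_tendsto_nat, ← tendsto_add_atTop_iff_nat 1]
  refine Tendsto.congr' ?_ <| ((GammaSeq_tendsto_Gamma c).mul (GammaSeq_tendsto_Gamma d)).div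
    ((GammaSeq_tendsto_Gamma a).mul (GammaSeq_tendsto_Gamma b)) hGamma
  filter_upwards [eventually_ne_atTop 0] with n hn
  exact (prod_range_mul_add_natCast_div_eq_GammaSeq h hn).symm

end Complex

theorem prod_gamma_identity_general (y : ℝ) (hy : 0 < y) (z : ℂ) :
    HasProd (fun k : ℕ => 1 + z / (((y : ℂ) + k) * ((y : ℂ) + k + 1)))
      (Complex.Gamma y * Complex.Gamma (y + 1) /
        (Complex.Gamma (1 / 2 + y - (1 - 4 * z) ^ ((1 : ℂ) / 2) / 2) *
          Complex.Gamma (1 / 2 + y + (1 - 4 * z) ^ ((1 : ℂ) / 2) / 2))) := by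
  have hs : ((1 - 4 * z) ^ ((1 : ℂ) / 2)) ^ 2 = 1 - 4 * z := by
    rw [one_div]
    exact_mod_cast Complex.cpow_ofNat_inv_pow (1 - 4 * z) 2
  have hpole : ∀ x : ℝ, 0 < x → ∀ k : ℕ, (x : ℂ) + k ≠ 0 := fun x hx k => by
    exact_mod_cast (by positivity : 0 < x + k).ne'
  have hy1 : ∀ k : ℕ, (y : ℂ) + 1 + k ≠ 0 := by exact_mod_cast hpole (y + 1) (by linarith)
  have hD : ∀ k : ℕ, ((y : ℂ) + k) * ((y : ℂ) + k + 1) ≠ 0 := fun k => by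
    exact_mod_cast (by positivity : (0 : ℝ) < (y + k) * (y + k + 1)).ne'
  set s := (1 - 4 * z) ^ ((1 : ℂ) / 2)
  convert Complex.hasProd_mul_add_natCast_div_mul_add_natCast (a := 1 / 2 + y - s / 2)
    (b := 1 / 2 + y + s / 2) (c := y) (d := y + 1) (by ring) (hpole y hy) hy1 using 2 with k
  rw [add_right_comm _ 1, one_add_div (hD k)]
  congr 1
  linear_combination (1 / 4 : ℂ) * hs

theorem prod_gamma_identity (y : ℝ) (hy : 0 < y) (z : ℂ)
    (hz : ∀ t : ℝ, t ≤ 0 → 1 - 4 * z ≠ (t : ℂ)) :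
    HasProd (fun k : ℕ => 1 + z / (((y : ℂ) + k) * ((y : ℂ) + k + 1)))
      (Complex.Gamma y * Complex.Gamma (y + 1) /
        (Complex.Gamma (1 / 2 + y - (1 - 4 * z) ^ ((1 : ℂ) / 2) / 2) *
          Complex.Gamma (1 / 2 + y + (1 - 4 * z) ^ ((1 : ℂ) / 2) / 2))) :=
  prod_gamma_identity_general y hy z
end

section
/- The function 𝔉 is well defined on D: for every complex sequence x = {x_k}_{k≥1} with ∑_{k=1}^{∞} |x_k x_{k+1}| < ∞, the multiple series 1 + ∑_{m=1}^{∞} (-1)^m ∑_{k_1 ≥ 1, k_{j+1} ≥ k_j + 2} x_{k_1} x_{k_1+1} ⋯ x_{k_m} x_{k_m+1} converges absolutely, and moreover |𝔉(x)| ≤ exp(∑_{k=1}^{∞} |x_k x_{k+1}|). -/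
/-!
Only strictly increasing index tuples `k` contribute to the `m`-th inner series, and the `m!`
rearrangements of such a tuple are pairwise distinct. Expanding `S ^ m = (∑ₖ |xₖ xₖ₊₁|) ^ m` as a
sum over all `m`-tuples therefore bounds the `m`-th series of absolute values by `S ^ m / m!`,
and summing over `m` gives absolute convergence and `|𝔉(x)| ≤ exp S`.
-/

open Classical

noncomputable def Fterm (x : ℕ → ℂ) (m : ℕ) (k : Fin m → ℕ) : ℂ :=
  if ∀ i : Fin m, ∀ h : (i : ℕ) + 1 < m, k i + 2 ≤ k ⟨(i : ℕ) + 1, h⟩ then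
    ∏ i : Fin m, x (k i) * x (k i + 1)
  else 0

/-- The function 𝔉 applied to the sequence (x 0, x 1, x 2, …), i.e. x is 0-based:
`x k` represents `x_{k+1}` of the paper. -/
noncomputable def FF (x : ℕ → ℂ) : ℂ :=
  1 + ∑' m : ℕ, (-1 : ℂ) ^ (m + 1) * (∑' k : Fin (m + 1) → ℕ, Fterm x (m + 1) k)

/-- 𝔉 of the finite tuple (x 0, …, x (n-1)), by extending with zeros. -/
noncomputable def FFfin (n : ℕ) (x : ℕ → ℂ) : ℂ :=
  FF fun k => if k < n then x k else 0

open scoped ENNReal Nat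

def IsTwoSeparated {m : ℕ} (k : Fin m → ℕ) : Prop :=
  ∀ i : Fin m, ∀ h : (i : ℕ) + 1 < m, k i + 2 ≤ k ⟨(i : ℕ) + 1, h⟩

theorem IsTwoSeparated.strictMono {m : ℕ} {k : Fin m → ℕ} (hk : IsTwoSeparated k) :
    StrictMono k := by
  cases m with
  | zero => exact fun i => i.elim0
  | succ n =>
    refine Fin.strictMono_iff_lt_succ.2 fun i => ?_
    exact Nat.lt_of_lt_of_le (Nat.lt_add_of_pos_right two_pos) (hk i.castSucc (by simp))

theorem injective_comp_perm_of_strictMono {α : Type*} [Preorder α] (m : ℕ) :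
    Function.Injective fun p : Equiv.Perm (Fin m) × {k : Fin m → α // StrictMono k} =>
      p.2.1 ∘ p.1 := by
  rintro ⟨σ, k, hk⟩ ⟨τ, l, hl⟩ h
  obtain rfl : k = l := (hk.range_inj hl).1 <| by
    simpa only [EquivLike.range_comp] using congrArg Set.range h
  obtain rfl : σ = τ := Equiv.ext (congrFun (hk.injective.comp_left h))
  rfl

theorem ENNReal.tsum_prod_comp_eq_pow {α : Type*} (A : α → ℝ≥0∞) (m : ℕ) :
    ∑' k : Fin m → α, ∏ i, A (k i) = (∑' a, A a) ^ m := by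
  induction m with
  | zero => simp
  | succ m ih =>
    rw [← (Fin.consEquiv fun _ => α).tsum_eq, ENNReal.tsum_prod', pow_succ', ← ih,
      ← ENNReal.tsum_mul_right]
    simp [Fin.consEquiv, Fin.prod_univ_succ, ENNReal.tsum_mul_left]

/-- The `m!` rearrangements of a strictly increasing tuple are distinct tuples. -/
theorem ENNReal.factorial_mul_tsum_strictMono_le {α : Type*} [Preorder α] (A : α → ℝ≥0∞)
    (m : ℕ) : m ! * ∑' k : {k : Fin m → α // StrictMono k}, ∏ i, A (k.1 i) ≤ (∑' a, A a) ^ m :=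
  calc (m ! : ℝ≥0∞) * ∑' k : {k : Fin m → α // StrictMono k}, ∏ i, A (k.1 i)
      = ∑' p : Equiv.Perm (Fin m) × {k : Fin m → α // StrictMono k}, ∏ i, A ((p.2.1 ∘ p.1) i) := by
        have (σ : Equiv.Perm (Fin m)) (k : {k : Fin m → α // StrictMono k}) :
            ∏ i, A (k.1 (σ i)) = ∏ i, A (k.1 i) :=
          Equiv.prod_comp σ fun i => A (k.1 i)
        simp [ENNReal.tsum_prod', this, Fintype.card_perm]
    _ ≤ ∑' k : Fin m → α, ∏ i, A (k i) :=
        ENNReal.tsum_comp_le_tsum_of_injective (injective_comp_perm_of_strictMono m) _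
    _ = (∑' a, A a) ^ m := ENNReal.tsum_prod_comp_eq_pow A m

theorem enorm_Fterm_le_indicator (x : ℕ → ℂ) (m : ℕ) (k : Fin m → ℕ) :
    ‖Fterm x m k‖ₑ ≤
      {k : Fin m → ℕ | StrictMono k}.indicator (fun k => ∏ i, ‖x (k i) * x (k i + 1)‖ₑ) k := by
  unfold Fterm
  split_ifs with hk
  · rw [Set.indicator_of_mem (IsTwoSeparated.strictMono hk)]
    simp [enorm_eq_nnnorm, nnnorm_prod]
  · simp

theorem tsum_enorm_Fterm_le (x : ℕ → ℂ) (m : ℕ) :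
    ∑' k, ‖Fterm x m k‖ₑ ≤ (∑' n, ‖x n * x (n + 1)‖ₑ) ^ m / m ! := by
  rw [ENNReal.le_div_iff_mul_le (by simp [m.factorial_ne_zero]) (by simp), mul_comm]
  calc (m ! : ℝ≥0∞) * ∑' k, ‖Fterm x m k‖ₑ
      ≤ m ! * ∑' k, {k : Fin m → ℕ | StrictMono k}.indicator
          (fun k => ∏ i, ‖x (k i) * x (k i + 1)‖ₑ) k := by
        gcongr with k
        exact enorm_Fterm_le_indicator x m k
    _ = m ! * ∑' k : {k : Fin m → ℕ // StrictMono k}, ∏ i, ‖x (k.1 i) * x (k.1 i + 1)‖ₑ := by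
        rw [← tsum_subtype]
        rfl
    _ ≤ (∑' n, ‖x n * x (n + 1)‖ₑ) ^ m := ENNReal.factorial_mul_tsum_strictMono_le _ m

theorem summable_norm_and_tsum_le_of_tsum_enorm_le {ι E : Type*} [SeminormedAddCommGroup E]
    {f : ι → E} {C : ℝ} (hC : 0 ≤ C) (h : ∑' i, ‖f i‖ₑ ≤ ENNReal.ofReal C) :
    Summable (fun i => ‖f i‖) ∧ ∑' i, ‖f i‖ ≤ C := by
  have hf : Summable fun i => ‖f i‖ :=
    tsum_enorm_ne_top_iff_summable_norm.1 (h.trans_lt ENNReal.ofReal_lt_top).ne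
  refine ⟨hf, ?_⟩
  have hofReal : ENNReal.ofReal (∑' i, ‖f i‖) ≤ ENNReal.ofReal C := by
    simpa only [ENNReal.ofReal_tsum_of_nonneg (fun _ => norm_nonneg _) hf, ofReal_norm] using h
  exact (ENNReal.ofReal_le_ofReal_iff hC).1 hofReal

theorem summable_norm_Fterm_and_tsum_le (x : ℕ → ℂ) (hx : Summable fun k => ‖x k * x (k + 1)‖)
    (m : ℕ) : Summable (fun k => ‖Fterm x m k‖) ∧
      ∑' k, ‖Fterm x m k‖ ≤ (∑' n, ‖x n * x (n + 1)‖) ^ m / m ! := by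
  refine summable_norm_and_tsum_le_of_tsum_enorm_le (by positivity)
    ((tsum_enorm_Fterm_le x m).trans_eq ?_)
  rw [ENNReal.ofReal_div_of_pos (by positivity),
    ENNReal.ofReal_pow (tsum_nonneg fun _ => norm_nonneg _), ENNReal.ofReal_natCast,
    ENNReal.ofReal_tsum_of_nonneg (fun _ => norm_nonneg _) hx]
  simp only [ofReal_norm]

theorem FF_well_defined (x : ℕ → ℂ) (hx : Summable fun k => ‖x k * x (k + 1)‖) :
    (∀ m : ℕ, Summable fun k : Fin m → ℕ => ‖Fterm x m k‖) ∧
      (Summable fun m : ℕ => ‖(-1 : ℂ) ^ (m + 1) * (∑' k : Fin (m + 1) → ℕ, Fterm x (m + 1) k)‖) ∧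
      ‖FF x‖ ≤ Real.exp (∑' k : ℕ, ‖x k * x (k + 1)‖) := by
  set S := ∑' k : ℕ, ‖x k * x (k + 1)‖
  have hFterm := summable_norm_Fterm_and_tsum_le x hx
  have hterm (m : ℕ) :
      ‖(-1 : ℂ) ^ (m + 1) * ∑' k, Fterm x (m + 1) k‖ ≤ S ^ (m + 1) / (m + 1)! := by
    rw [norm_mul, norm_pow, norm_neg, norm_one, one_pow, one_mul]
    exact (norm_tsum_le_tsum_norm (hFterm _).1).trans (hFterm _).2
  have hexp : HasSum (fun m => S ^ (m + 1) / (m + 1)!) (Real.exp S - 1) := by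
    simpa [Real.exp_eq_exp_ℝ] using
      (hasSum_nat_add_iff' 1).2 (NormedSpace.expSeries_div_hasSum_exp S)
  have hsum := hexp.summable.of_nonneg_of_le (fun _ => norm_nonneg _) hterm
  refine ⟨fun m => (hFterm m).1, hsum, ?_⟩
  calc ‖FF x‖ ≤ 1 + ∑' m, ‖(-1 : ℂ) ^ (m + 1) * ∑' k, Fterm x (m + 1) k‖ := by
        rw [FF, ← norm_one (α := ℂ)]
        exact (norm_add_le _ _).trans (by gcongr; exact norm_tsum_le_tsum_norm hsum)
    _ ≤ 1 + (Real.exp S - 1) := by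
        gcongr
        exact hexp.tsum_eq ▸ hsum.tsum_le_tsum hterm hexp.summable
    _ = Real.exp S := by ring
end

section
/- For integers p, r, ℓ with 1 < p ≤ r+1 ≤ ℓ and any complex numbers x_1, …, x_ℓ, the following identity holds: 𝔉(x_1,…,x_r)·𝔉(x_p,…,x_ℓ) − 𝔉(x_1,…,x_ℓ)·𝔉(x_p,…,x_r) = (∏_{j=p-1}^{r} x_j x_{j+1}) · 𝔉(x_1,…,x_{p-2}) · 𝔉(x_{r+2},…,x_ℓ). -/
open Classical

/-!
Reading the index tuple `k` of `Fterm` as the edges `{kᵢ, kᵢ + 1}`, 𝔉(x_1, …, x_n) is the signed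
generating function of the matchings of the path on `n` vertices, the edge `{k, k + 1}` having
weight `x_k x_{k+1}`. Sorting matchings by whether the last vertex is matched gives the recursion
𝔉(x_1, …, x_{n+2}) = 𝔉(x_1, …, x_{n+1}) - x_{n+1} x_{n+2} 𝔉(x_1, …, x_n), so 𝔉 is a continuant.
The identity is then Euler's identity for continuants: both sides satisfy this recursion in `ℓ`,
so it suffices to check `ℓ = r + 1` and `ℓ = r + 2`, and the first case follows by induction on `r`.
-/

def IsSpaced {m : ℕ} (k : Fin m → ℕ) : Prop :=
  ∀ i : Fin m, ∀ h : (i : ℕ) + 1 < m, k i + 2 ≤ k ⟨(i : ℕ) + 1, h⟩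

namespace IsSpaced

variable {m : ℕ} {k : Fin m → ℕ}

lemma add_two_mul_sub_le (hk : IsSpaced k) {i j : Fin m} (hij : i ≤ j) :
    k i + 2 * (j - i : ℕ) ≤ k j := by
  obtain ⟨j, hj⟩ := j
  induction j with
  | zero =>
    obtain rfl : i = ⟨0, hj⟩ := Fin.ext (Nat.le_zero.1 (Fin.le_def.1 hij))
    simp
  | succ j ih =>
    rcases eq_or_lt_of_le hij with rfl | hlt
    · simp
    have hstep := hk ⟨j, by omega⟩ hj
    have := ih (by omega) (Fin.le_def.2 (Nat.le_of_lt_succ (Fin.lt_def.1 hlt)))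
    dsimp only at hstep this ⊢
    omega

lemma two_mul_le (hk : IsSpaced k) (j : Fin m) : 2 * (j : ℕ) ≤ k j := by
  have := hk.add_two_mul_sub_le (i := ⟨0, j.pos⟩) (j := j) (Fin.le_def.2 (Nat.zero_le _))
  simp only [Nat.sub_zero] at this
  omega

lemma add_two_le (hk : IsSpaced k) {i j : Fin m} (hij : i < j) : k i + 2 ≤ k j := by
  have := hk.add_two_mul_sub_le hij.le
  rw [Fin.lt_def] at hij
  omega

end IsSpaced

lemma IsSpaced.le_last {m : ℕ} {k : Fin (m + 1) → ℕ} (hk : IsSpaced k) (i : Fin (m + 1)) :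
    k i ≤ k (Fin.last m) :=
  (Nat.le_add_right _ _).trans (hk.add_two_mul_sub_le (Fin.le_last i))

lemma isSpaced_iff_init {m : ℕ} {k : Fin (m + 1) → ℕ} :
    IsSpaced k ↔ IsSpaced (Fin.init k) ∧ ∀ i : Fin m, k i.castSucc + 2 ≤ k (Fin.last m) := by
  refine ⟨fun hk => ⟨fun i _ => hk i.castSucc (by simp),
    fun i => hk.add_two_le (Fin.castSucc_lt_last i)⟩, fun ⟨hinit, hlast⟩ i hi => ?_⟩
  rcases Nat.lt_or_ge ((i : ℕ) + 1) m with him | him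
  · exact hinit ⟨i, by omega⟩ him
  · have := hlast ⟨i, by omega⟩
    rw [show (⟨(i : ℕ) + 1, hi⟩ : Fin (m + 1)) = Fin.last m from Fin.ext (by simp; omega)]
    exact this

lemma Fterm_of_isSpaced {x : ℕ → ℂ} {m : ℕ} {k : Fin m → ℕ} (hk : IsSpaced k) :
    Fterm x m k = ∏ i, x (k i) * x (k i + 1) :=
  if_pos hk

lemma Fterm_of_not_isSpaced {x : ℕ → ℂ} {m : ℕ} {k : Fin m → ℕ} (hk : ¬IsSpaced k) :
    Fterm x m k = 0 :=
  if_neg hk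

noncomputable def truncate (N : ℕ) (x : ℕ → ℂ) (j : ℕ) : ℂ := if j < N then x j else 0

lemma Fterm_truncate (N : ℕ) (x : ℕ → ℂ) {m : ℕ} (k : Fin m → ℕ) :
    Fterm (truncate N x) m k =
      if IsSpaced k ∧ ∀ i, k i + 1 < N then ∏ i, x (k i) * x (k i + 1) else 0 := by
  by_cases hk : IsSpaced k
  · rw [Fterm_of_isSpaced hk]
    by_cases hN : ∀ i, k i + 1 < N
    · rw [if_pos ⟨hk, hN⟩]
      refine Finset.prod_congr rfl fun i _ => ?_
      simp only [truncate, if_pos (hN i), if_pos (Nat.lt_of_succ_lt (hN i))]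
    · rw [if_neg fun h => hN h.2]
      obtain ⟨i, hi⟩ := not_forall.1 hN
      exact Finset.prod_eq_zero (Finset.mem_univ i) (by simp [truncate, if_neg hi])
  · rw [Fterm_of_not_isSpaced hk, if_neg fun h => hk h.1]

lemma Fterm_truncate_add_two (n : ℕ) (x : ℕ → ℂ) {m : ℕ} (k : Fin (m + 1) → ℕ) :
    Fterm (truncate (n + 2) x) (m + 1) k =
      Fterm (truncate (n + 1) x) (m + 1) k +
        if k (Fin.last m) = n then x n * x (n + 1) * Fterm (truncate n x) m (Fin.init k) else 0 := by
  simp only [Fterm_truncate]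
  by_cases hlast : k (Fin.last m) = n
  · have hfull : ¬(IsSpaced k ∧ ∀ i, k i + 1 < n + 1) := fun h => by
      have := h.2 (Fin.last m)
      omega
    rw [if_pos hlast, if_neg hfull, zero_add, mul_ite, mul_zero]
    refine if_congr ?_ (by rw [Fin.prod_univ_castSucc, hlast, mul_comm]; rfl) rfl
    rw [isSpaced_iff_init]
    constructor
    · rintro ⟨⟨hinit, hgap⟩, -⟩
      exact ⟨hinit, fun i => by have := hgap i; simp only [Fin.init]; omega⟩
    · rintro ⟨hinit, hbound⟩
      refine ⟨⟨hinit, fun i => by have := hbound i; simp only [Fin.init] at this; omega⟩, ?_⟩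
      refine Fin.lastCases (by omega) fun i => ?_
      have := hbound i
      simp only [Fin.init] at this
      omega
  · rw [if_neg hlast, add_zero]
    refine if_congr (and_congr_right fun hk => ?_) rfl rfl
    constructor
    · intro h i
      have := h (Fin.last m)
      have := hk.le_last i
      omega
    · intro h i
      have := h i
      omega

noncomputable def matchingSum (x : ℕ → ℂ) (m : ℕ) : ℂ := ∑' k : Fin m → ℕ, Fterm x m k

lemma FFfin_eq (n : ℕ) (x : ℕ → ℂ) :
    FFfin n x = 1 + ∑' m, (-1 : ℂ) ^ (m + 1) * matchingSum (truncate n x) (m + 1) :=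
  rfl

lemma matchingSum_zero (x : ℕ → ℂ) : matchingSum x 0 = 1 := by
  simp [matchingSum, Fterm]

lemma summable_Fterm_truncate (N : ℕ) (x : ℕ → ℂ) (m : ℕ) :
    Summable (Fterm (truncate N x) m) := by
  refine summable_of_ne_finset_zero (s := Fintype.piFinset fun _ => Finset.range N) fun k hk => ?_
  rw [Fterm_truncate, if_neg]
  rintro ⟨-, hbound⟩
  exact hk (Fintype.mem_piFinset.2 fun i => Finset.mem_range.2 (by have := hbound i; omega))

lemma matchingSum_truncate_eq_zero {N m : ℕ} (x : ℕ → ℂ) (h : N < 2 * m) :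
    matchingSum (truncate N x) m = 0 := by
  refine (tsum_congr fun k => ?_).trans tsum_zero
  rw [Fterm_truncate, if_neg]
  rintro ⟨hk, hbound⟩
  have hlow := hk.two_mul_le (⟨m - 1, by omega⟩ : Fin m)
  rw [Fin.val_mk] at hlow
  have := hbound ⟨m - 1, by omega⟩
  omega

lemma matchingSum_truncate_add_two (n : ℕ) (x : ℕ → ℂ) (m : ℕ) :
    matchingSum (truncate (n + 2) x) (m + 1) =
      matchingSum (truncate (n + 1) x) (m + 1) + x n * x (n + 1) * matchingSum (truncate n x) m := by
  suffices matchingSum (truncate (n + 2) x) (m + 1) - matchingSum (truncate (n + 1) x) (m + 1) =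
      x n * x (n + 1) * matchingSum (truncate n x) m by linear_combination this
  rw [matchingSum, matchingSum, ← (summable_Fterm_truncate _ x _).tsum_sub
    (summable_Fterm_truncate _ x _), matchingSum, ← tsum_mul_left,
    ← (Fin.snoc_left_injective (α := fun _ => ℕ) n).tsum_eq]
  · refine tsum_congr fun k => ?_
    rw [Fterm_truncate_add_two, add_sub_cancel_left, Fin.snoc_last, if_pos rfl, Fin.init_snoc]
  · intro k hk
    rw [Function.mem_support, Fterm_truncate_add_two, add_sub_cancel_left, ite_ne_right_iff] at hk
    exact ⟨Fin.init k, by rw [← hk.1]; exact Fin.snoc_init_self k⟩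

lemma summable_mul_matchingSum_truncate (c : ℕ → ℂ) (N : ℕ) (x : ℕ → ℂ) :
    Summable fun m => c m * matchingSum (truncate N x) m := by
  refine summable_of_ne_finset_zero (s := Finset.range (N + 1)) fun m hm => ?_
  rw [Finset.mem_range, not_lt] at hm
  rw [matchingSum_truncate_eq_zero x (by omega), mul_zero]

lemma FFfin_add_two (n : ℕ) (x : ℕ → ℂ) :
    FFfin (n + 2) x = FFfin (n + 1) x - x n * x (n + 1) * FFfin n x := by
  set c := x n * x (n + 1)
  have hunmatched : Summable fun m => (-1 : ℂ) ^ (m + 1) * matchingSum (truncate (n + 1) x) (m + 1) :=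
    (summable_nat_add_iff 1).2 (summable_mul_matchingSum_truncate (fun m => (-1) ^ m) _ x)
  have hmatched := summable_mul_matchingSum_truncate (fun m => (-1 : ℂ) ^ (m + 1) * c) n x
  have hsplit (m : ℕ) : (-1 : ℂ) ^ (m + 1) * matchingSum (truncate (n + 2) x) (m + 1) =
      (-1) ^ (m + 1) * matchingSum (truncate (n + 1) x) (m + 1) +
        (-1) ^ (m + 1) * c * matchingSum (truncate n x) m := by
    rw [matchingSum_truncate_add_two]
    ring
  have htail : ∑' m, (-1 : ℂ) ^ (m + 1) * c * matchingSum (truncate n x) m = -c * FFfin n x := by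
    rw [hmatched.tsum_eq_zero_add, FFfin_eq, mul_add, ← tsum_mul_left, matchingSum_zero]
    congr 1
    · ring
    · exact tsum_congr fun m => by ring
  rw [FFfin_eq, FFfin_eq (n + 1), tsum_congr hsplit, hunmatched.tsum_add hmatched, htail]
  ring

lemma FFfin_of_le_one {n : ℕ} (hn : n ≤ 1) (x : ℕ → ℂ) : FFfin n x = 1 := by
  rw [FFfin_eq, tsum_congr fun m => by rw [matchingSum_truncate_eq_zero x (by omega), mul_zero],
    tsum_zero, add_zero]

noncomputable def continuant : ℕ → (ℕ → ℂ) → ℂ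
  | 0, _ => 1
  | 1, _ => 1
  | n + 2, x => continuant (n + 1) x - x n * x (n + 1) * continuant n x

lemma continuant_one (x : ℕ → ℂ) : continuant 1 x = 1 :=
  rfl

lemma continuant_add_two (n : ℕ) (x : ℕ → ℂ) :
    continuant (n + 2) x = continuant (n + 1) x - x n * x (n + 1) * continuant n x :=
  rfl

lemma FFfin_eq_continuant (n : ℕ) (x : ℕ → ℂ) : FFfin n x = continuant n x := by
  induction n using Nat.twoStepInduction with
  | zero => exact FFfin_of_le_one zero_le_one x
  | one => exact FFfin_of_le_one le_rfl x
  | more n ih₀ ih₁ => rw [FFfin_add_two, continuant_add_two, ih₀, ih₁]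

lemma continuant_mul_sub_mul_succ (b d : ℕ) (x : ℕ → ℂ) :
    continuant (b + 1 + d) x * continuant (d + 1) (fun k => x (k + (b + 1))) -
        continuant (b + 1 + d + 1) x * continuant d (fun k => x (k + (b + 1))) =
      (∏ j ∈ Finset.range (d + 1), x (b + j) * x (b + j + 1)) * continuant b x := by
  induction d with
  | zero => simp [continuant]
  | succ d ih =>
    rw [show b + 1 + (d + 1) + 1 = b + 1 + d + 2 by ring, continuant_add_two, continuant_add_two,
      Finset.prod_range_succ]
    linear_combination (norm := ring_nf) x (b + d + 1) * x (b + d + 2) * ih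

lemma continuant_mul_sub_mul (b d e : ℕ) (x : ℕ → ℂ) :
    continuant (b + 1 + d) x * continuant (d + 1 + e) (fun k => x (k + (b + 1))) -
        continuant (b + 1 + d + 1 + e) x * continuant d (fun k => x (k + (b + 1))) =
      (∏ j ∈ Finset.range (d + 1), x (b + j) * x (b + j + 1)) * continuant b x *
        continuant e (fun k => x (k + (b + 1 + d) + 1)) := by
  induction e using Nat.twoStepInduction with
  | zero => simpa [continuant] using continuant_mul_sub_mul_succ b d x
  | one =>
    rw [show b + 1 + d + 1 + 1 = b + 1 + d + 2 by ring, continuant_add_two, continuant_add_two,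
      continuant_one]
    linear_combination (norm := ring_nf) continuant_mul_sub_mul_succ b d x
  | more e ih₀ ih₁ =>
    rw [show b + 1 + d + 1 + (e + 2) = b + 1 + d + 1 + e + 2 by ring,
      show d + 1 + (e + 2) = d + 1 + e + 2 by ring, continuant_add_two,
      continuant_add_two, continuant_add_two]
    linear_combination (norm := ring_nf) ih₁ - x (b + d + e + 2) * x (b + d + e + 3) * ih₀

theorem FF_finite_identity (p r ℓ : ℕ) (hp : 1 < p) (hpr : p ≤ r + 1) (hrl : r + 1 ≤ ℓ)
    (x : ℕ → ℂ) :
    FFfin r x * FFfin (ℓ + 1 - p) (fun k => x (k + (p - 1))) -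
        FFfin ℓ x * FFfin (r + 1 - p) (fun k => x (k + (p - 1))) =
      (∏ j ∈ Finset.Icc (p - 1) r, x (j - 1) * x j) * FFfin (p - 2) x *
        FFfin (ℓ - r - 1) (fun k => x (k + r + 1)) := by
  obtain ⟨b, rfl⟩ : ∃ b, p = b + 2 := ⟨p - 2, by omega⟩
  obtain ⟨d, rfl⟩ : ∃ d, r = b + 1 + d := ⟨r - (b + 1), by omega⟩
  obtain ⟨e, rfl⟩ : ∃ e, ℓ = b + 1 + d + 1 + e := ⟨ℓ - (b + 1 + d + 1), by omega⟩
  have hprod : ∏ j ∈ Finset.Icc (b + 1) (b + 1 + d), x (j - 1) * x j =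
      ∏ j ∈ Finset.range (d + 1), x (b + j) * x (b + j + 1) := by
    rw [← Finset.Ico_add_one_right_eq_Icc, Finset.prod_Ico_eq_prod_range,
      show b + 1 + d + 1 - (b + 1) = d + 1 by omega]
    exact Finset.prod_congr rfl fun j _ => by rw [show b + 1 + j - 1 = b + j by omega]; ring_nf
  rw [show b + 1 + d + 1 + e + 1 - (b + 2) = d + 1 + e by omega,
    show b + 1 + d + 1 - (b + 2) = d by omega, show b + 2 - 2 = b by omega,
    show b + 2 - 1 = b + 1 by omega, show b + 1 + d + 1 + e - (b + 1 + d) - 1 = e by omega,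
    hprod]
  simp only [FFfin_eq_continuant]
  exact continuant_mul_sub_mul b d e x
end

section
/- For all complex α, γ, x with γ ∉ ℤ and α, α−γ avoiding values making the Gamma factors singular, the following Wronskian-type identity holds: ₁F₁(α; γ; x)·₁F₁(α−γ; 1−γ; x) − ((γ−α)x/(γ(γ−1)))·₁F₁(α; γ+1; x)·₁F₁(α−γ+1; 2−γ; x) = e^x. -/
open Classical

/-- Pochhammer symbol (a)_k. -/
noncomputable def poch (a : ℂ) (k : ℕ) : ℂ := ∏ j ∈ Finset.range k, (a + j)

/-- Kummer confluent hypergeometric function ₁F₁(a;b;x). -/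
noncomputable def oneF1 (a b x : ℂ) : ℂ :=
  ∑' k : ℕ, poch a k / poch b k * x ^ k / (Nat.factorial k)

/-!
Both products are Cauchy products of power series. Since `(γ)_{k+1} = γ (γ+1)_k` and
`(1-γ)_{j+1} = (1-γ)(2-γ)_j`, the second product can be re-indexed onto the coefficients
`u k j = (α)_k (α-γ)_j / ((γ)_k (1-γ)_j k! j!)` of the first one (`wronskianTerm`), and the
coefficient of `x^n` on the left becomes `S n = ∑_{k+j=n} F k j` with
`F k j = u k j (γ+k-j)/(γ+k)` (`wronskianWeight`). Together with `G k j = k u k j` this weight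
satisfies the WZ-type relation `(k+j+1) F k (j+1) = F k j - G (k+1) j + G k (j+1)`; summed over
an antidiagonal the `G` terms telescope, leaving `(n+1) S (n+1) = S n`, so `S n = 1/n!`, the
coefficients of `exp x`.
-/

open Finset Filter Topology
open scoped Nat

@[simp] lemma poch_zero (a : ℂ) : poch a 0 = 1 := prod_range_zero _

lemma poch_succ (a : ℂ) (k : ℕ) : poch a (k + 1) = poch a k * (a + k) := prod_range_succ _ _

lemma poch_succ' (a : ℂ) (k : ℕ) : poch a (k + 1) = a * poch (a + 1) k := by
  rw [poch, prod_range_succ', poch, mul_comm]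
  push_cast
  simp only [add_zero, add_assoc, add_comm (1 : ℂ)]

lemma poch_ne_zero {a : ℂ} (ha : ∀ j : ℕ, a + j ≠ 0) (k : ℕ) : poch a k ≠ 0 :=
  prod_ne_zero_iff.2 fun j _ => ha j

noncomputable def kummerCoeff (a b : ℂ) (k : ℕ) : ℂ := poch a k / poch b k / k !

@[simp] lemma kummerCoeff_zero (a b : ℂ) : kummerCoeff a b 0 = 1 := by simp [kummerCoeff]

lemma kummerCoeff_succ (a b : ℂ) (k : ℕ) :
    kummerCoeff a b (k + 1) = kummerCoeff a b k * ((a + k) / ((b + k) * (k + 1))) := by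
  simp only [kummerCoeff, poch_succ, Nat.factorial_succ, Nat.cast_mul, div_eq_mul_inv, mul_inv]
  push_cast
  ring

lemma kummerCoeff_add_one_right {b : ℂ} (hb : ∀ j : ℕ, b + j ≠ 0) (a : ℂ) (k : ℕ) :
    (b + k) * kummerCoeff a (b + 1) k = b * kummerCoeff a b k := by
  have hb' : ∀ j : ℕ, b + 1 + j ≠ 0 := fun j => by convert hb (j + 1) using 1; push_cast; ring
  have h := (poch_succ' b k).symm.trans (poch_succ b k)
  have := poch_ne_zero hb k
  have := poch_ne_zero hb' k
  have : (k ! : ℂ) ≠ 0 := Nat.cast_ne_zero.2 k.factorial_ne_zero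
  simp only [kummerCoeff]
  field_simp
  linear_combination (-poch a k) * h

lemma kummerCoeff_add_one_add_one {b : ℂ} (hb : b ≠ 0) (a : ℂ) (k : ℕ) :
    a * kummerCoeff (a + 1) (b + 1) k = b * (k + 1) * kummerCoeff a b (k + 1) := by
  simp only [kummerCoeff, poch_succ', Nat.factorial_succ, Nat.cast_mul, div_eq_mul_inv, mul_inv]
  push_cast
  field_simp

lemma oneF1_eq_tsum (a b x : ℂ) : oneF1 a b x = ∑' k, kummerCoeff a b k * x ^ k := by
  simp only [oneF1, kummerCoeff, div_mul_eq_mul_div]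

lemma summable_norm_kummerCoeff_mul_pow (a b x : ℂ) :
    Summable fun k => ‖kummerCoeff a b k * x ^ k‖ := by
  have hratio : Tendsto (fun k : ℕ => (a + k) / ((b + k) * (k + 1)) * x) atTop (𝓝 0) := by
    have h := ((tendsto_add_mul_div_add_mul_atTop_nhds a b 1 one_ne_zero).mul
      (tendsto_one_div_add_atTop_nhds_zero_nat (𝕜 := ℂ))).mul_const x
    simp only [one_mul, div_one, mul_zero, zero_mul] at h
    refine h.congr fun k => ?_
    rw [div_mul_div_comm, mul_one]
  refine summable_of_ratio_norm_eventually_le (r := 1 / 2) (by norm_num) ?_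
  filter_upwards [(tendsto_norm_zero.comp hratio).eventually_le_const (by norm_num : (0:ℝ) < 1 / 2)]
    with k hk
  simp only [Function.comp_apply] at hk
  rw [norm_norm, norm_norm, kummerCoeff_succ, pow_succ, mul_mul_mul_comm, norm_mul, mul_comm]
  gcongr

lemma hasSum_oneF1_mul_oneF1 (a b c d x : ℂ) :
    HasSum (fun n => (∑ p ∈ antidiagonal n, kummerCoeff a b p.1 * kummerCoeff c d p.2) * x ^ n)
      (oneF1 a b x * oneF1 c d x) := by
  have hf := summable_norm_kummerCoeff_mul_pow a b x
  have hg := summable_norm_kummerCoeff_mul_pow c d x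
  have hterm : ∀ n, (∑ p ∈ antidiagonal n, kummerCoeff a b p.1 * kummerCoeff c d p.2) * x ^ n =
      ∑ p ∈ antidiagonal n, kummerCoeff a b p.1 * x ^ p.1 * (kummerCoeff c d p.2 * x ^ p.2) :=
    fun n => by
      rw [sum_mul]
      refine sum_congr rfl fun p hp => ?_
      rw [← mem_antidiagonal.1 hp, pow_add]
      ring
  rw [oneF1_eq_tsum, oneF1_eq_tsum, tsum_mul_tsum_eq_tsum_sum_antidiagonal_of_summable_norm hf hg]
  simp_rw [hterm]
  exact (summable_norm_sum_mul_antidiagonal_of_summable_norm hf hg).of_norm.hasSum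

lemma sum_antidiagonal_eq_inv_factorial {K : Type*} [Field K] [CharZero K] {F G : ℕ → ℕ → K}
    (h₀₀ : F 0 0 = 1) (hG : ∀ j, G 0 j = 0) (hF : ∀ k, (k + 1) * F (k + 1) 0 = G (k + 1) 0)
    (hstep : ∀ k j, (k + j + 1) * F k (j + 1) = F k j - G (k + 1) j + G k (j + 1)) (n : ℕ) :
    ∑ p ∈ antidiagonal n, F p.1 p.2 = (n ! : K)⁻¹ := by
  have hrec : ∀ n : ℕ, (n + 1) * ∑ p ∈ antidiagonal (n + 1), F p.1 p.2
      = ∑ p ∈ antidiagonal n, F p.1 p.2 := by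
    intro n
    have hG₁ := Nat.sum_antidiagonal_succ (f := fun p => G p.1 p.2) (n := n)
    have hG₂ := Nat.sum_antidiagonal_succ' (f := fun p => G p.1 p.2) (n := n)
    have hsum : ∑ p ∈ antidiagonal n, ((n : K) + 1) * F p.1 (p.2 + 1)
        = ∑ p ∈ antidiagonal n, (F p.1 p.2 - G (p.1 + 1) p.2 + G p.1 (p.2 + 1)) :=
      sum_congr rfl fun p hp => by rw [← hstep, ← mem_antidiagonal.1 hp]; push_cast; ring
    rw [mul_sum, Nat.sum_antidiagonal_succ', hsum, sum_add_distrib, sum_sub_distrib]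
    simp only [hG, zero_add] at hG₁ hG₂
    push_cast
    linear_combination hF n - hG₂ + hG₁
  induction n with
  | zero => simp [h₀₀]
  | succ n ih =>
    have h := hrec n
    rw [ih] at h
    have : (n + 1 : K) ≠ 0 := n.cast_add_one_ne_zero
    rw [Nat.factorial_succ, Nat.cast_mul, Nat.cast_add_one, mul_inv, ← h]
    field_simp

section Wronskian

variable {α γ : ℂ}

noncomputable def wronskianTerm (α γ : ℂ) (k j : ℕ) : ℂ :=
  kummerCoeff α γ k * kummerCoeff (α - γ) (1 - γ) j

noncomputable def wronskianWeight (α γ : ℂ) (k j : ℕ) : ℂ :=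
  wronskianTerm α γ k j * (γ + k - j) / (γ + k)

variable (h₀ : ∀ j : ℕ, γ + j ≠ 0) (h₁ : ∀ j : ℕ, 1 - γ + j ≠ 0)
include h₀

lemma wronskianWeight_zero_right (k : ℕ) : wronskianWeight α γ k 0 = wronskianTerm α γ k 0 := by
  have := h₀ k
  simp only [wronskianWeight, Nat.cast_zero, sub_zero]
  field_simp

include h₁ in
lemma wronskianWeight_step (k j : ℕ) :
    (k + j + 1) * wronskianWeight α γ k (j + 1) = wronskianWeight α γ k j
      - (k + 1) * wronskianTerm α γ (k + 1) j + k * wronskianTerm α γ k (j + 1) := by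
  have := h₀ k
  have := h₁ j
  have : (j + 1 : ℂ) ≠ 0 := j.cast_add_one_ne_zero
  simp only [wronskianWeight, wronskianTerm, kummerCoeff_succ]
  push_cast
  field_simp
  ring

include h₁ in
lemma sum_antidiagonal_wronskianWeight (n : ℕ) :
    ∑ p ∈ antidiagonal n, wronskianWeight α γ p.1 p.2 = (n ! : ℂ)⁻¹ := by
  refine sum_antidiagonal_eq_inv_factorial (G := fun k j => k * wronskianTerm α γ k j) ?_
    (fun j => by simp) (fun k => ?_)
    (fun k j => by push_cast; exact wronskianWeight_step h₀ h₁ k j) n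
  · simp [wronskianWeight_zero_right h₀, wronskianTerm]
  · rw [wronskianWeight_zero_right h₀]
    push_cast
    rfl

include h₁ in
lemma shiftedTerm_eq_wronskianTerm (k j : ℕ) :
    (γ - α) / (γ * (γ - 1)) * (kummerCoeff α (γ + 1) k * kummerCoeff (α - γ + 1) (2 - γ) j)
      = (j + 1) * wronskianTerm α γ k (j + 1) / (γ + k) := by
  have hγ : γ ≠ 0 := by simpa using h₀ 0
  have hγ' : 1 - γ ≠ 0 := by simpa using h₁ 0
  have : γ - 1 ≠ 0 := fun h => hγ' (by linear_combination -h)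
  have := h₀ k
  have hleft := kummerCoeff_add_one_right h₀ α k
  have hright := kummerCoeff_add_one_add_one hγ' (α - γ) j
  rw [show (2 : ℂ) - γ = 1 - γ + 1 by ring]
  calc (γ - α) / (γ * (γ - 1)) * (kummerCoeff α (γ + 1) k * kummerCoeff (α - γ + 1) (1 - γ + 1) j)
      = ((γ + k) * kummerCoeff α (γ + 1) k) * ((α - γ) * kummerCoeff (α - γ + 1) (1 - γ + 1) j)
          / (γ * (1 - γ) * (γ + k)) := by
        field_simp
        ring
    _ = (γ * kummerCoeff α γ k) * ((1 - γ) * (j + 1) * kummerCoeff (α - γ) (1 - γ) (j + 1))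
          / (γ * (1 - γ) * (γ + k)) := by rw [hleft, hright]
    _ = (j + 1) * wronskianTerm α γ k (j + 1) / (γ + k) := by
        simp only [wronskianTerm]
        field_simp

include h₁ in
lemma wronskian_coeff_succ (m : ℕ) :
    ∑ p ∈ antidiagonal (m + 1), wronskianTerm α γ p.1 p.2 - (γ - α) / (γ * (γ - 1)) *
        ∑ p ∈ antidiagonal m, kummerCoeff α (γ + 1) p.1 * kummerCoeff (α - γ + 1) (2 - γ) p.2
      = ((m + 1)! : ℂ)⁻¹ := by
  rw [← sum_antidiagonal_wronskianWeight h₀ h₁, Nat.sum_antidiagonal_succ',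
    Nat.sum_antidiagonal_succ', mul_sum, wronskianWeight_zero_right h₀, add_sub_assoc,
    ← sum_sub_distrib]
  congr 1
  refine sum_congr rfl fun p _ => ?_
  have := h₀ p.1
  rw [shiftedTerm_eq_wronskianTerm h₀ h₁, wronskianWeight]
  push_cast
  field_simp

end Wronskian

theorem oneF1_wronskian (α γ x : ℂ) (hγ : ∀ n : ℤ, γ ≠ (n : ℂ)) :
    oneF1 α γ x * oneF1 (α - γ) (1 - γ) x -
        (γ - α) * x / (γ * (γ - 1)) * oneF1 α (γ + 1) x * oneF1 (α - γ + 1) (2 - γ) x =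
      Complex.exp x := by
  have h₀ : ∀ j : ℕ, γ + j ≠ 0 := fun j h => hγ (-j) (by push_cast; linear_combination h)
  have h₁ : ∀ j : ℕ, 1 - γ + j ≠ 0 := fun j h => hγ (j + 1) (by push_cast; linear_combination -h)
  have hP := (hasSum_nat_add_iff' 1).2 (hasSum_oneF1_mul_oneF1 α γ (α - γ) (1 - γ) x)
  have hQ := (hasSum_oneF1_mul_oneF1 α (γ + 1) (α - γ + 1) (2 - γ) x).mul_left
    ((γ - α) * x / (γ * (γ - 1)))
  have hexp := (hasSum_nat_add_iff' 1).2 (NormedSpace.expSeries_div_hasSum_exp x)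
  rw [← Complex.exp_eq_exp_ℂ] at hexp
  have hdiff := (hP.sub hQ).unique <| hexp.congr_fun fun m => by
    rw [div_eq_mul_inv (x ^ (m + 1)), ← wronskian_coeff_succ h₀ h₁ m, pow_succ]
    simp only [wronskianTerm]
    ring
  simp only [range_one, sum_singleton, Nat.antidiagonal_zero, kummerCoeff_zero] at hdiff
  linear_combination hdiff
end

section
/- For 0 < q < 1 and complex w, ν with q^{ν+k} ≠ 1 for all nonnegative integers k: 𝔉( { w / (q^{−(ν+k)/2} − q^{(ν+k)/2}) }_{k=0}^{∞} ) = ₀φ₁(; q^ν; q, −q^{ν+1/2} w²), i.e. the 𝔉-function of the sequence x_k = w q^{(ν+k)/2}/(1 − q^{ν+k}) (k ≥ 0) equals ∑_{m=0}^{∞} q^{m(m−1)} (−q^{ν+1/2}w²)^m/((q;q)_m (q^ν;q)_m), with the standard ₀φ₁ normalization. -/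
open Classical

/-- q-Pochhammer symbol (a;q)_k. -/
noncomputable def qP (a q : ℂ) (k : ℕ) : ℂ := ∏ j ∈ Finset.range k, (1 - a * q ^ j)

/-- Infinite q-Pochhammer symbol (a;q)_∞. -/
noncomputable def qPInf (a q : ℂ) : ℂ := ∏' j : ℕ, (1 - a * q ^ j)

/-- Basic hypergeometric series ₀φ₁(;b;q,z). -/
noncomputable def phi01 (b q z : ℂ) : ℂ :=
  ∑' k : ℕ, q ^ (k * (k - 1)) * z ^ k / (qP q q k * qP b q k)

/- ------------------------------------------------------------------ -/
/- Auxiliary development                                              -/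
/- ------------------------------------------------------------------ -/

open Finset Filter Topology

noncomputable def aaF (q : ℝ) (ν : ℂ) (k : ℕ) : ℂ := (1 - (q:ℂ)^(ν + (k:ℂ)))⁻¹

def gapcond {m : ℕ} (k : Fin m → ℕ) : Prop :=
  ∀ i : Fin m, ∀ h : (i:ℕ)+1 < m, k i + 2 ≤ k ⟨(i:ℕ)+1, h⟩

noncomputable def ggF (q : ℝ) (ν : ℂ) (m K : ℕ) (k : Fin m → ℕ) : ℂ :=
  if gapcond k ∧ (∀ i, K ≤ k i) then
    ∏ i, (q:ℂ)^(k i) * (aaF q ν (k i) * aaF q ν (k i + 1))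
  else 0

noncomputable def valF (q : ℝ) (ν : ℂ) (m K : ℕ) : ℂ :=
  (q:ℂ)^(m*(m-1)) * (q:ℂ)^(m*K) * (∏ i ∈ range m, aaF q ν (K+i)) *
    (∏ r ∈ range m, (1 - (q:ℂ)^(r+1)))⁻¹

noncomputable def uF (q : ℝ) (ν : ℂ) (z : ℂ) (k : ℕ) : ℂ :=
  (q:ℂ) ^ (k * (k - 1)) * z ^ k / (qP (q:ℂ) (q:ℂ) k * qP ((q:ℂ)^ν) (q:ℂ) k)

section Aux
variable {q : ℝ} {ν : ℂ}

lemma qne (hq0 : 0 < q) : (q:ℂ) ≠ 0 := by exact_mod_cast hq0.ne'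

lemma hone (hν : ∀ k : ℕ, (q : ℂ) ^ (ν + (k : ℂ)) ≠ 1) (n : ℕ) :
    (1 - (q:ℂ)^(ν + (n:ℂ))) ≠ 0 := by
  rw [sub_ne_zero]; exact (hν n).symm

lemma cpow_shift (hq0 : 0 < q) (ν : ℂ) (n r : ℕ) :
    (q:ℂ)^(ν + ((n+r : ℕ):ℂ)) = (q:ℂ)^(ν + (n:ℂ)) * (q:ℂ)^r := by
  push_cast
  rw [← add_assoc, Complex.cpow_add _ _ (qne hq0), Complex.cpow_natCast]

lemma pow_real_ne (hq0 : 0 < q) (hq1 : q < 1) (r : ℕ) (hr : 1 ≤ r) :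
    (1 - (q:ℂ)^r) ≠ 0 := by
  have h1 : q ^ r < 1 := pow_lt_one₀ hq0.le hq1 (by omega)
  have h2 : ((1 - q^r : ℝ) : ℂ) ≠ 0 := by
    exact_mod_cast (by linarith : (1:ℝ) - q^r ≠ 0)
  push_cast at h2
  exact h2

lemma keyid (hq0 : 0 < q)
    (hν : ∀ k : ℕ, (q : ℂ) ^ (ν + (k : ℂ)) ≠ 1) (n r : ℕ) :
    (1 - (q:ℂ)^r) * (aaF q ν n * aaF q ν (n+r)) = aaF q ν n - (q:ℂ)^r * aaF q ν (n+r) := by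
  have h1 := hone hν n
  have h2 := hone hν (n+r)
  have h3 := cpow_shift hq0 ν n r
  unfold aaF
  rw [h3] at h2 ⊢
  field_simp [h1, h2]
  have h2' : 1 - (q:ℂ)^r * (q:ℂ)^(ν + (n:ℂ)) ≠ 0 := by rwa [mul_comm]
  linear_combination mul_inv_cancel₀ h2'

lemma cpow_nu_n (hq0 : 0 < q) (ν : ℂ) (n : ℕ) :
    (q:ℂ)^(ν + (n:ℂ)) = (q:ℂ)^ν * (q:ℂ)^n := by
  rw [Complex.cpow_add _ _ (qne hq0), Complex.cpow_natCast]

lemma aa_tendsto (hq0 : 0 < q) (hq1 : q < 1) :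
    Tendsto (aaF q ν) atTop (𝓝 1) := by
  have h1 : Tendsto (fun n : ℕ => (q:ℂ)^(ν + (n:ℂ))) atTop (𝓝 0) := by
    simp only [cpow_nu_n hq0]
    rw [show (0:ℂ) = (q:ℂ)^ν * 0 by ring]
    apply Tendsto.const_mul
    apply tendsto_pow_atTop_nhds_zero_of_norm_lt_one
    rw [Complex.norm_real, Real.norm_eq_abs, abs_of_pos hq0]; exact hq1
  have h2 : Tendsto (fun n : ℕ => (1 - (q:ℂ)^(ν + (n:ℂ)))⁻¹) atTop (𝓝 ((1 - 0)⁻¹)) := by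
    exact (tendsto_const_nhds.sub h1).inv₀ (by norm_num)
  show Tendsto (fun n : ℕ => (1 - (q:ℂ)^(ν + (n:ℂ)))⁻¹) atTop (𝓝 1)
  simpa using h2

lemma aa_bound (hq0 : 0 < q) (hq1 : q < 1) :
    ∃ C : ℝ, 1 ≤ C ∧ ∀ n, ‖aaF q ν n‖ ≤ C := by
  have h := ((aa_tendsto (ν := ν) hq0 hq1).norm).bddAbove_range
  obtain ⟨C0, hC0⟩ := h
  refine ⟨max C0 1, le_max_right _ _, fun n => ?_⟩
  exact le_trans (hC0 (Set.mem_range_self n)) (le_max_left _ _)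

lemma telescope_hasSum {f : ℕ → ℂ} (hf : Summable f) :
    HasSum (fun j => f j - f (j+1)) (f 0) := by
  have h1 : Summable fun j => f (j+1) := (summable_nat_add_iff 1).2 hf
  have h := hf.hasSum.sub h1.hasSum
  have he : ∑' j, f j - ∑' j, f (j+1) = f 0 := by
    rw [hf.tsum_eq_zero_add]; ring
  rwa [he] at h

lemma tele_ptwise (hq0 : 0 < q) (hq1 : q < 1)
    (hν : ∀ k : ℕ, (q : ℂ) ^ (ν + (k : ℂ)) ≠ 1) (s n : ℕ) :
    (q:ℂ)^((s+1)*n) * ∏ i ∈ range (s+2), aaF q ν (n+i)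
      = (1 - (q:ℂ)^(s+1))⁻¹ *
        ((q:ℂ)^((s+1)*n) * ∏ i ∈ range (s+1), aaF q ν (n+i)
         - (q:ℂ)^((s+1)*(n+1)) * ∏ i ∈ range (s+1), aaF q ν ((n+1)+i)) := by
  have hne := pow_real_ne hq0 hq1 (s+1) (by omega)
  set A : ℂ := ∏ i ∈ range s, aaF q ν (n+1+i) with hA
  have p1 : ∏ i ∈ range (s+1), aaF q ν (n+i) = A * aaF q ν n := by
    rw [Finset.prod_range_succ']
    congr 1
    exact Finset.prod_congr rfl (fun i _ => by congr 1; omega)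
  have p2 : ∏ i ∈ range (s+1), aaF q ν (n+1+i) = A * aaF q ν (n+(s+1)) := by
    rw [Finset.prod_range_succ, ← hA]
    congr 2
    omega
  have p3 : ∏ i ∈ range (s+2), aaF q ν (n+i) = A * aaF q ν n * aaF q ν (n+(s+1)) := by
    rw [Finset.prod_range_succ, p1]
  have hkey := keyid hq0 hν n (s+1)
  have hpow : (q:ℂ)^((s+1)*(n+1)) = (q:ℂ)^((s+1)*n) * (q:ℂ)^(s+1) := by
    rw [mul_add, mul_one, pow_add]
  rw [p1, p2, p3, hpow, eq_inv_mul_iff_mul_eq₀ hne]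
  linear_combination ((q:ℂ)^((s+1)*n) * A) * hkey

lemma tele (hq0 : 0 < q) (hq1 : q < 1)
    (hν : ∀ k : ℕ, (q : ℂ) ^ (ν + (k : ℂ)) ≠ 1) (r K : ℕ) (hr : 1 ≤ r) :
    HasSum (fun j => (q:ℂ)^(r*(K+j)) * ∏ i ∈ range (r+1), aaF q ν (K+j+i))
      ((q:ℂ)^(r*K) * (∏ i ∈ range r, aaF q ν (K+i)) * (1 - (q:ℂ)^r)⁻¹) := by
  set F : ℕ → ℂ := fun j => (q:ℂ)^(r*(K+j)) * ∏ i ∈ range r, aaF q ν (K+j+i) with hF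
  obtain ⟨C, hC1, hC⟩ := aa_bound (ν := ν) hq0 hq1
  have hqr1 : q^r < 1 := pow_lt_one₀ hq0.le hq1 (by omega)
  have hqr0 : (0:ℝ) ≤ q^r := by positivity
  have hFs : Summable F := by
    apply Summable.of_norm_bounded (g := fun j => (C^r * q^(r*K)) * (q^r)^j)
    · exact (summable_geometric_of_lt_one hqr0 hqr1).mul_left _
    · intro j
      have h1 : ‖(q:ℂ)^(r*(K+j))‖ = q^(r*K) * (q^r)^j := by
        rw [norm_pow, Complex.norm_real, Real.norm_eq_abs, abs_of_pos hq0]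
        rw [← pow_mul, ← pow_add]; congr 1; ring
      have h2 : ∏ i ∈ range r, ‖aaF q ν (K+j+i)‖ ≤ C^r := by
        calc ∏ i ∈ range r, ‖aaF q ν (K+j+i)‖ ≤ ∏ _i ∈ range r, C :=
              Finset.prod_le_prod (fun i _ => norm_nonneg _) (fun i _ => hC _)
          _ = C^r := by simp
      rw [hF, norm_mul, norm_prod, h1]
      calc q^(r*K) * (q^r)^j * ∏ i ∈ range r, ‖aaF q ν (K+j+i)‖
          ≤ q^(r*K) * (q^r)^j * C^r :=
            mul_le_mul_of_nonneg_left h2 (by positivity)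
        _ = C^r * q^(r*K) * (q^r)^j := by ring
  have htel : ∀ j, (q:ℂ)^(r*(K+j)) * ∏ i ∈ range (r+1), aaF q ν (K+j+i)
      = (1 - (q:ℂ)^r)⁻¹ * (F j - F (j+1)) := by
    intro j
    obtain ⟨s, rfl⟩ : ∃ s, r = s + 1 := ⟨r-1, by omega⟩
    rw [show F j = (q:ℂ)^((s+1)*(K+j)) * ∏ i ∈ range (s+1), aaF q ν ((K+j)+i) from rfl]
    rw [show F (j+1)
        = (q:ℂ)^((s+1)*((K+j)+1)) * ∏ i ∈ range (s+1), aaF q ν (((K+j)+1)+i) from rfl]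
    exact tele_ptwise hq0 hq1 hν s (K+j)
  have H := (telescope_hasSum hFs).mul_left ((1 - (q:ℂ)^r)⁻¹)
  have hfun : (fun j => (q:ℂ)^(r*(K+j)) * ∏ i ∈ range (r+1), aaF q ν (K+j+i))
      = fun j => (1 - (q:ℂ)^r)⁻¹ * (F j - F (j+1)) := funext htel
  rw [hfun]
  have hval : (1 - (q:ℂ)^r)⁻¹ * F 0
      = (q:ℂ)^(r*K) * (∏ i ∈ range r, aaF q ν (K+i)) * (1 - (q:ℂ)^r)⁻¹ := by
    rw [hF]
    simp only [add_zero]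
    ring
  rwa [hval] at H

lemma summable_pi_prod {f : ℕ → ℝ} (hf : Summable f) (hf0 : ∀ n, 0 ≤ f n) :
    ∀ m : ℕ, Summable (fun k : Fin m → ℕ => ∏ i, f (k i)) := by
  intro m
  induction m with
  | zero =>
    have : HasSum (fun k : Fin 0 → ℕ => ∏ i, f (k i)) (∏ i : Fin 0, f ((default : Fin 0 → ℕ) i)) :=
      hasSum_single _ (fun b hb => absurd (Subsingleton.elim b default) hb)
    exact this.summable
  | succ m ih =>
    have h1 : (0:ℕ→ℝ) ≤ f := fun n => hf0 n
    have h2 : (0:(Fin m → ℕ) → ℝ) ≤ (fun k : Fin m → ℕ => ∏ i, f (k i)) :=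
      fun k => Finset.prod_nonneg fun i _ => hf0 _
    have hG : Summable (fun p : ℕ × (Fin m → ℕ) => f p.1 * ∏ i, f (p.2 i)) :=
      Summable.mul_of_nonneg (f := f) (g := fun k : Fin m → ℕ => ∏ i, f (k i)) hf ih h1 h2
    have := (Fin.consEquiv (fun _ : Fin (m+1) => ℕ)).symm.summable_iff.mpr hG
    apply this.congr
    intro k
    simp [Fin.consEquiv, Fin.prod_univ_succ, Fin.tail]

lemma summable_gg (hq0 : 0 < q) (hq1 : q < 1) (m K : ℕ) :
    Summable (ggF q ν m K) := by
  obtain ⟨C, hC1, hC⟩ := aa_bound (ν := ν) hq0 hq1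
  set f0 : ℕ → ℝ := fun n => C*C*q^n with hf0def
  have hf0s : Summable f0 := (summable_geometric_of_lt_one hq0.le hq1).mul_left _
  have hf00 : ∀ n, 0 ≤ f0 n := fun n => by
    have : (0:ℝ) ≤ C := le_trans zero_le_one hC1
    positivity
  refine Summable.of_norm_bounded (E := ℂ) (f := ggF q ν m K)
    (g := fun k : Fin m → ℕ => ∏ i, f0 (k i)) (summable_pi_prod hf0s hf00 m) ?_
  intro k
  unfold ggF
  split_ifs with h
  · rw [norm_prod]
    apply Finset.prod_le_prod (fun i _ => norm_nonneg _)
    intro i _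
    rw [norm_mul, norm_mul, norm_pow, Complex.norm_real, Real.norm_eq_abs, abs_of_pos hq0]
    calc q ^ k i * (‖aaF q ν (k i)‖ * ‖aaF q ν (k i + 1)‖)
        ≤ q ^ k i * (C * C) := by
          apply mul_le_mul_of_nonneg_left _ (by positivity)
          exact mul_le_mul (hC _) (hC _) (norm_nonneg _) (le_trans zero_le_one hC1)
      _ = f0 (k i) := by rw [hf0def]; ring
  · simp only [norm_zero]
    exact Finset.prod_nonneg fun i _ => hf00 _

lemma gaps_mono {M : ℕ} {u : Fin M → ℕ} (hg : gapcond u) :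
    ∀ (p : ℕ) (i : Fin M) (hp : (i:ℕ)+p < M), u i ≤ u ⟨(i:ℕ)+p, hp⟩ := by
  intro p
  induction p with
  | zero =>
    intro i hp
    have he : (⟨(i:ℕ)+0, hp⟩ : Fin M) = i := Fin.ext (by simp)
    rw [he]
  | succ p ih =>
    intro i hp
    have h1 : (i:ℕ)+p < M := by omega
    have h2 := ih i h1
    have h3 : ((⟨(i:ℕ)+p, h1⟩ : Fin M) : ℕ) + 1 < M := by show (i:ℕ)+p+1 < M; omega
    have h4 := hg ⟨(i:ℕ)+p, h1⟩ h3
    have h5 : (⟨((⟨(i:ℕ)+p, h1⟩ : Fin M):ℕ)+1, h3⟩ : Fin M) = ⟨(i:ℕ)+(p+1), hp⟩ :=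
      Fin.ext (by simp only [Fin.val_mk]; omega)
    rw [h5] at h4
    omega

lemma cnd_cons {m : ℕ} (K a : ℕ) (t : Fin m → ℕ) :
    (gapcond (Fin.cons a t : Fin (m+1) → ℕ) ∧ ∀ i, K ≤ (Fin.cons a t : Fin (m+1) → ℕ) i)
      ↔ (K ≤ a ∧ (gapcond t ∧ ∀ i, a+2 ≤ t i)) := by
  constructor
  · rintro ⟨hg, hK⟩
    have hKa : K ≤ a := by simpa using hK 0
    have hgt : gapcond t := by
      intro i h
      have hh : ((i.succ : Fin (m+1)):ℕ)+1 < m+1 := by simp; omega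
      have hg' := hg i.succ hh
      rw [Fin.cons_succ] at hg'
      have he : (⟨((i.succ : Fin (m+1)):ℕ)+1, hh⟩ : Fin (m+1))
          = Fin.succ ⟨(i:ℕ)+1, h⟩ := Fin.ext (by simp)
      rw [he, Fin.cons_succ] at hg'
      exact hg'
    refine ⟨hKa, hgt, ?_⟩
    intro i
    have hm : 0 < m := i.pos
    have h1 : ((0 : Fin (m+1)):ℕ)+1 < m+1 := by simp; omega
    have h2 := hg 0 h1
    rw [Fin.cons_zero] at h2
    have he : (⟨((0 : Fin (m+1)):ℕ)+1, h1⟩ : Fin (m+1)) = Fin.succ ⟨0, hm⟩ :=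
      Fin.ext (by simp)
    rw [he, Fin.cons_succ] at h2
    have h3 : (0:ℕ) + (i:ℕ) < m := by omega
    have h4 := gaps_mono hgt (i:ℕ) ⟨0, hm⟩ (by simpa using h3)
    have he2 : (⟨((⟨0, hm⟩ : Fin m):ℕ)+(i:ℕ), by simpa using h3⟩ : Fin m) = i :=
      Fin.ext (by simp)
    rw [he2] at h4
    omega
  · rintro ⟨hKa, hgt, hlb⟩
    constructor
    · intro i
      revert i
      refine Fin.cases ?_ ?_
      · intro hi
        have hm : 0 < m := by simpa using hi
        rw [Fin.cons_zero]
        have he : (⟨((0 : Fin (m+1)):ℕ)+1, hi⟩ : Fin (m+1)) = Fin.succ ⟨0, hm⟩ :=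
          Fin.ext (by simp)
        rw [he, Fin.cons_succ]
        exact hlb _
      · intro j hi
        have hj : (j:ℕ)+1 < m := by simpa using hi
        rw [Fin.cons_succ]
        have he : (⟨((j.succ : Fin (m+1)):ℕ)+1, hi⟩ : Fin (m+1))
            = Fin.succ ⟨(j:ℕ)+1, hj⟩ := Fin.ext (by simp)
        rw [he, Fin.cons_succ]
        exact hgt j hj
    · intro i
      refine Fin.cases ?_ ?_ i
      · rw [Fin.cons_zero]; exact hKa
      · intro j
        rw [Fin.cons_succ]
        exact le_trans (le_trans hKa (by omega)) (hlb j)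

lemma gg_cons (q : ℝ) (ν : ℂ) (m K a : ℕ) (t : Fin m → ℕ) :
    ggF q ν (m+1) K (Fin.cons a t)
      = (if K ≤ a then (q:ℂ)^a * (aaF q ν a * aaF q ν (a+1)) else 0) * ggF q ν m (a+2) t := by
  unfold ggF
  rw [if_congr (cnd_cons K a t) rfl rfl]
  by_cases h1 : K ≤ a <;> by_cases h2 : gapcond t ∧ ∀ i, a+2 ≤ t i <;>
    simp [h1, h2, Fin.prod_univ_succ]

lemma houter (hq0 : 0 < q) (hq1 : q < 1)
    (hν : ∀ k : ℕ, (q : ℂ) ^ (ν + (k : ℂ)) ≠ 1) (m K : ℕ) :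
    HasSum (fun a => (if K ≤ a then (q:ℂ)^a * (aaF q ν a * aaF q ν (a+1)) else 0)
        * valF q ν m (a+2))
      (valF q ν (m+1) K) := by
  set h : ℕ → ℂ := fun a => (if K ≤ a then (q:ℂ)^a * (aaF q ν a * aaF q ν (a+1)) else 0)
        * valF q ν m (a+2) with hh
  set c0 : ℂ := (q:ℂ)^(m*(m-1)) * (q:ℂ)^(2*m) * (∏ r ∈ range m, (1 - (q:ℂ)^(r+1)))⁻¹
    with hc0
  have hinj : Function.Injective (fun j : ℕ => K + j) := fun x y hxy => by
    have hxy' : K + x = K + y := hxy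
    omega
  have hvanish : ∀ x ∉ Set.range (fun j : ℕ => K + j), h x = 0 := by
    intro x hx
    have : ¬ K ≤ x := by
      intro hKx
      exact hx ⟨x - K, Nat.add_sub_cancel' hKx⟩
    rw [hh]
    simp [this]
  rw [← Function.Injective.hasSum_iff hinj hvanish]
  have hcomp : ∀ j : ℕ, h (K + j)
      = c0 * ((q:ℂ)^((m+1)*(K+j)) * ∏ i ∈ range (m+2), aaF q ν (K+j+i)) := by
    intro j
    rw [hh]
    simp only [if_pos (Nat.le_add_right K j)]
    unfold valF
    have hprod : ∏ i ∈ range (m+2), aaF q ν (K+j+i)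
        = ((∏ i ∈ range m, aaF q ν ((K+j+2)+i)) * aaF q ν (K+j+1)) * aaF q ν (K+j) := by
      rw [Finset.prod_range_succ']
      congr 1
      rw [Finset.prod_range_succ']
      congr 1
      exact Finset.prod_congr rfl (fun i _ => by congr 1; omega)
    rw [hprod]
    have hpows : (q:ℂ)^(K+j) * (q:ℂ)^(m*(K+j+2))
        = (q:ℂ)^(2*m) * (q:ℂ)^((m+1)*(K+j)) := by
      rw [← pow_add, ← pow_add]; congr 1; ring
    calc (q:ℂ)^(K+j) * (aaF q ν (K+j) * aaF q ν (K+j+1)) *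
          ((q:ℂ)^(m*(m-1)) * (q:ℂ)^(m*(K+j+2)) * (∏ i ∈ range m, aaF q ν ((K+j+2)+i)) *
            (∏ r ∈ range m, (1 - (q:ℂ)^(r+1)))⁻¹)
        = ((q:ℂ)^(K+j) * (q:ℂ)^(m*(K+j+2))) * (aaF q ν (K+j) * aaF q ν (K+j+1)) *
          ((q:ℂ)^(m*(m-1)) * (∏ i ∈ range m, aaF q ν ((K+j+2)+i)) *
            (∏ r ∈ range m, (1 - (q:ℂ)^(r+1)))⁻¹) := by ring
      _ = c0 * ((q:ℂ)^((m+1)*(K+j)) *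
            (((∏ i ∈ range m, aaF q ν ((K+j+2)+i)) * aaF q ν (K+j+1)) * aaF q ν (K+j))) := by
          rw [hpows, hc0]; ring
  rw [show ((fun a => h a) ∘ (fun j : ℕ => K + j)) = fun j =>
      c0 * ((q:ℂ)^((m+1)*(K+j)) * ∏ i ∈ range (m+2), aaF q ν (K+j+i)) from funext hcomp]
  have H := (tele hq0 hq1 hν (m+1) K (by omega)).mul_left c0
  have hval : c0 * ((q:ℂ)^((m+1)*K) * (∏ i ∈ range (m+1), aaF q ν (K+i)) *
      (1 - (q:ℂ)^(m+1))⁻¹) = valF q ν (m+1) K := by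
    unfold valF
    rw [hc0]
    have he1 : (q:ℂ)^(m*(m-1)) * (q:ℂ)^(2*m) = (q:ℂ)^((m+1)*m) := by
      rw [← pow_add]; congr 1
      cases m with
      | zero => rfl
      | succ s => simp only [Nat.succ_sub_one]; ring
    have he2 : (∏ r ∈ range (m+1), (1 - (q:ℂ)^(r+1)))⁻¹
        = (∏ r ∈ range m, (1 - (q:ℂ)^(r+1)))⁻¹ * (1 - (q:ℂ)^(m+1))⁻¹ := by
      rw [Finset.prod_range_succ, mul_inv]
    rw [he2]
    rw [show (m+1)*(m+1-1) = (m+1)*m from by simp]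
    rw [← he1]
    ring
  rwa [hval] at H

lemma gg_hasSum (hq0 : 0 < q) (hq1 : q < 1)
    (hν : ∀ k : ℕ, (q : ℂ) ^ (ν + (k : ℂ)) ≠ 1) :
    ∀ m K, HasSum (ggF q ν m K) (valF q ν m K) := by
  intro m
  induction m with
  | zero =>
    intro K
    have h1 : ggF q ν 0 K default = valF q ν 0 K := by
      unfold ggF valF gapcond
      simp
    have : HasSum (ggF q ν 0 K) (ggF q ν 0 K default) :=
      hasSum_single _ (fun b hb => absurd (Subsingleton.elim b default) hb)
    rwa [h1] at this
  | succ m ih =>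
    intro K
    set E : ℕ × (Fin m → ℕ) ≃ (Fin (m+1) → ℕ) := Fin.consEquiv (fun _ : Fin (m+1) => ℕ)
      with hE
    have hS : Summable (ggF q ν (m+1) K) := summable_gg hq0 hq1 (m+1) K
    have hS' : Summable (ggF q ν (m+1) K ∘ E) := E.summable_iff.mpr hS
    have hfiber : ∀ a : ℕ, HasSum (fun t : Fin m → ℕ => ggF q ν (m+1) K (Fin.cons a t))
        ((if K ≤ a then (q:ℂ)^a * (aaF q ν a * aaF q ν (a+1)) else 0) * valF q ν m (a+2)) := by
      intro a
      have := (ih (a+2)).mul_left (if K ≤ a then (q:ℂ)^a * (aaF q ν a * aaF q ν (a+1)) else 0)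
      rw [show (fun t : Fin m → ℕ => ggF q ν (m+1) K (Fin.cons a t))
          = fun t => (if K ≤ a then (q:ℂ)^a * (aaF q ν a * aaF q ν (a+1)) else 0)
            * ggF q ν m (a+2) t from funext (gg_cons q ν m K a)]
      exact this
    have htsum : ∑' k : Fin (m+1) → ℕ, ggF q ν (m+1) K k = valF q ν (m+1) K := by
      rw [← E.tsum_eq (ggF q ν (m+1) K)]
      rw [show (fun c : ℕ × (Fin m → ℕ) => ggF q ν (m+1) K (E c))
          = (ggF q ν (m+1) K ∘ ⇑E) from rfl]
      have hfib' : ∀ a, Summable (fun t : Fin m → ℕ => (ggF q ν (m+1) K ∘ E) (a, t)) :=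
        fun a => (hfiber a).summable
      rw [hS'.tsum_prod' hfib']
      calc ∑' (a : ℕ) (t : Fin m → ℕ), (ggF q ν (m+1) K ∘ E) (a, t)
          = ∑' (a : ℕ), ((if K ≤ a then (q:ℂ)^a * (aaF q ν a * aaF q ν (a+1)) else 0)
              * valF q ν m (a+2)) := tsum_congr (fun a => (hfiber a).tsum_eq)
        _ = valF q ν (m+1) K := (houter hq0 hq1 hν m K).tsum_eq
    rw [← htsum]
    exact hS.hasSum

lemma qP_q (q : ℝ) (M : ℕ) :
    qP (q:ℂ) (q:ℂ) M = ∏ r ∈ range M, (1 - (q:ℂ)^(r+1)) := by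
  unfold qP
  exact Finset.prod_congr rfl (fun j _ => by rw [← pow_succ'])

lemma qP_nu (hq0 : 0 < q) (ν : ℂ) (M : ℕ) :
    qP ((q:ℂ)^ν) (q:ℂ) M = ∏ i ∈ range M, (1 - (q:ℂ)^(ν + (i:ℂ))) := by
  unfold qP
  exact Finset.prod_congr rfl (fun j _ => by rw [cpow_nu_n hq0])

lemma aa_prod_inv (hq0 : 0 < q) (ν : ℂ) (M : ℕ) :
    ∏ i ∈ range M, aaF q ν (0+i) = (qP ((q:ℂ)^ν) (q:ℂ) M)⁻¹ := by
  rw [qP_nu hq0, ← Finset.prod_inv_distrib]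
  exact Finset.prod_congr rfl (fun j _ => by unfold aaF; rw [Nat.zero_add])

lemma summable_u (hq0 : 0 < q) (hq1 : q < 1)
    (hν : ∀ k : ℕ, (q : ℂ) ^ (ν + (k : ℂ)) ≠ 1) (z : ℂ) :
    Summable (uF q ν z) := by
  obtain ⟨C, hC1, hC⟩ := aa_bound (ν := ν) hq0 hq1
  have hC0 : (0:ℝ) < C := lt_of_lt_of_le zero_lt_one hC1
  have h1q : (0:ℝ) < 1 - q := by linarith
  set D : ℝ := ‖z‖ * C / (1-q) with hD
  have hD0 : 0 ≤ D := by positivity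
  have hbound : ∀ k, ‖uF q ν z k‖ ≤ (q^(k-1) * D)^k := by
    intro k
    have hP1 : (1-q)^k ≤ ‖qP (q:ℂ) (q:ℂ) k‖ := by
      rw [qP_q, norm_prod,
        show (1-q)^k = ∏ _i ∈ range k, (1-q) from by simp]
      apply Finset.prod_le_prod (fun i _ => h1q.le)
      intro i _
      have : ((1 - q^(i+1) : ℝ) : ℂ) = 1 - (q:ℂ)^(i+1) := by push_cast; ring
      rw [← this, Complex.norm_real, Real.norm_eq_abs]
      have hqi : q^(i+1) ≤ q := by
        calc q^(i+1) ≤ q^1 := pow_le_pow_of_le_one hq0.le hq1.le (by omega)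
          _ = q := pow_one q
      rw [abs_of_nonneg (by nlinarith [pow_pos hq0 (i+1)] : (0:ℝ) ≤ 1 - q^(i+1))]
      linarith
    have hP2 : (C⁻¹)^k ≤ ‖qP ((q:ℂ)^ν) (q:ℂ) k‖ := by
      rw [qP_nu hq0, norm_prod,
        show (C⁻¹)^k = ∏ _i ∈ range k, C⁻¹ from by simp]
      apply Finset.prod_le_prod (fun i _ => by positivity)
      intro i _
      have hy : (1 - (q:ℂ)^(ν + (i:ℂ))) ≠ 0 := hone hν i
      have hyn : 0 < ‖1 - (q:ℂ)^(ν + (i:ℂ))‖ := norm_pos_iff.mpr hy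
      have := hC i
      unfold aaF at this
      rw [norm_inv] at this
      calc C⁻¹ ≤ (‖1 - (q:ℂ)^(ν + (i:ℂ))‖⁻¹)⁻¹ := by
            apply inv_anti₀ (inv_pos.mpr hyn) this
        _ = ‖1 - (q:ℂ)^(ν + (i:ℂ))‖ := inv_inv _
    have hPP : (1-q)^k * (C⁻¹)^k ≤ ‖qP (q:ℂ) (q:ℂ) k * qP ((q:ℂ)^ν) (q:ℂ) k‖ := by
      rw [norm_mul]
      exact mul_le_mul hP1 hP2 (by positivity) (norm_nonneg _)
    have hPP0 : (0:ℝ) < (1-q)^k * (C⁻¹)^k := by positivity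
    have hN : ‖uF q ν z k‖
        = q^(k*(k-1)) * ‖z‖^k / ‖qP (q:ℂ) (q:ℂ) k * qP ((q:ℂ)^ν) (q:ℂ) k‖ := by
      unfold uF
      rw [norm_div, norm_mul, norm_pow, norm_pow, Complex.norm_real, Real.norm_eq_abs,
        abs_of_pos hq0]
    rw [hN]
    calc q^(k*(k-1)) * ‖z‖^k / ‖qP (q:ℂ) (q:ℂ) k * qP ((q:ℂ)^ν) (q:ℂ) k‖
        ≤ q^(k*(k-1)) * ‖z‖^k / ((1-q)^k * (C⁻¹)^k) := by
          apply div_le_div_of_nonneg_left (by positivity) hPP0 hPP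
      _ = (q^(k-1) * D)^k := by
          rw [hD, mul_pow, div_pow, mul_pow]
          rw [show q^(k*(k-1)) = (q^(k-1))^k from by rw [Nat.mul_comm, pow_mul]]
          rw [inv_pow]
          field_simp
  have htend : Tendsto (fun k : ℕ => q^(k-1) * D) atTop (𝓝 (0 * D)) := by
    apply Tendsto.mul_const
    have h := tendsto_pow_atTop_nhds_zero_of_lt_one hq0.le hq1
    exact h.comp (tendsto_sub_atTop_nat 1)
  rw [zero_mul] at htend
  have hev : ∀ᶠ k : ℕ in atTop, ‖uF q ν z k‖ ≤ (1/2:ℝ)^k := by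
    have h2 : ∀ᶠ k : ℕ in atTop, q^(k-1) * D < 1/2 :=
      htend.eventually (gt_mem_nhds (by norm_num : (0:ℝ) < 1/2))
    filter_upwards [h2] with k hk
    calc ‖uF q ν z k‖ ≤ (q^(k-1) * D)^k := hbound k
      _ ≤ (1/2:ℝ)^k := pow_le_pow_left₀ (by positivity) hk.le k
  exact Summable.of_norm_bounded_eventually_nat
    (summable_geometric_of_lt_one (by norm_num) (by norm_num)) hev

lemma xx (hq0 : 0 < q) (w : ℂ) (n : ℕ) :
    (w * (q:ℂ)^((ν + (n:ℂ))/2) / (1 - (q:ℂ)^(ν+(n:ℂ)))) *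
      (w * (q:ℂ)^((ν + ((n+1:ℕ):ℂ))/2) / (1 - (q:ℂ)^(ν+((n+1:ℕ):ℂ))))
    = ((q:ℂ)^(ν+1/2) * w^2) * ((q:ℂ)^n * (aaF q ν n * aaF q ν (n+1))) := by
  have hc : (q:ℂ)^((ν+(n:ℂ))/2) * (q:ℂ)^((ν+((n+1:ℕ):ℂ))/2)
      = (q:ℂ)^(ν+1/2) * (q:ℂ)^(n:ℕ) := by
    rw [← Complex.cpow_add _ _ (qne hq0),
      show (ν+(n:ℂ))/2 + (ν+((n+1:ℕ):ℂ))/2 = (ν+1/2) + (n:ℂ) from by push_cast; ring,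
      Complex.cpow_add _ _ (qne hq0), Complex.cpow_natCast]
  unfold aaF
  rw [div_mul_div_comm, div_eq_mul_inv, mul_inv]
  linear_combination (w^2 * (1 - (q:ℂ)^(ν+(n:ℂ)))⁻¹ * (1 - (q:ℂ)^(ν+((n+1:ℕ):ℂ)))⁻¹) * hc

lemma Fterm_eq (hq0 : 0 < q) (w : ℂ) (M : ℕ) (k : Fin M → ℕ) :
    Fterm (fun j : ℕ => w * (q:ℂ)^((ν+(j:ℂ))/2) / (1 - (q:ℂ)^(ν+(j:ℂ)))) M k
      = ((q:ℂ)^(ν+1/2) * w^2)^M * ggF q ν M 0 k := by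
  unfold Fterm ggF
  have hcnd : (∀ i : Fin M, ∀ h : (i:ℕ)+1 < M, k i + 2 ≤ k ⟨(i:ℕ)+1,h⟩)
      ↔ (gapcond k ∧ ∀ i, 0 ≤ k i) := ⟨fun h => ⟨h, fun i => Nat.zero_le _⟩, fun h => h.1⟩
  rw [if_congr hcnd rfl rfl]
  split_ifs with h
  · rw [Finset.prod_congr rfl (fun i _ => xx hq0 w (k i))]
    rw [Finset.prod_mul_distrib, Finset.prod_const]
    simp
  · rw [mul_zero]

end Aux

theorem FF_eq_phi01 (q : ℝ) (hq0 : 0 < q) (hq1 : q < 1) (w ν : ℂ)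
    (hν : ∀ k : ℕ, (q : ℂ) ^ (ν + (k : ℂ)) ≠ 1) :
    FF (fun k => w * (q : ℂ) ^ ((ν + (k : ℂ)) / 2) / (1 - (q : ℂ) ^ (ν + (k : ℂ)))) =
      phi01 ((q : ℂ) ^ ν) (q : ℂ) (-(q : ℂ) ^ (ν + 1 / 2) * w ^ 2) := by
  set z : ℂ := -(q:ℂ) ^ (ν + 1 / 2) * w ^ 2 with hz
  set c : ℂ := (q:ℂ) ^ (ν + 1 / 2) * w ^ 2 with hc
  have hzc : z = -c := by rw [hz, hc]; ring
  have hu : Summable (uF q ν z) := summable_u hq0 hq1 hν z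
  have hterm : ∀ m : ℕ, (-1:ℂ)^(m+1) * (∑' k : Fin (m+1) → ℕ,
      Fterm (fun j : ℕ => w * (q:ℂ)^((ν+(j:ℂ))/2) / (1 - (q:ℂ)^(ν+(j:ℂ)))) (m+1) k)
      = uF q ν z (m+1) := by
    intro m
    have h1 : ∑' k : Fin (m+1) → ℕ,
        Fterm (fun j : ℕ => w * (q:ℂ)^((ν+(j:ℂ))/2) / (1 - (q:ℂ)^(ν+(j:ℂ)))) (m+1) k
        = c^(m+1) * valF q ν (m+1) 0 := by
      rw [tsum_congr (fun k => Fterm_eq hq0 w (m+1) k)]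
      exact ((gg_hasSum hq0 hq1 hν (m+1) 0).mul_left _).tsum_eq
    rw [h1]
    unfold uF valF
    rw [aa_prod_inv hq0 ν (m+1), ← qP_q q (m+1)]
    rw [Nat.mul_zero, pow_zero, hzc, neg_pow]
    rw [div_eq_mul_inv, mul_inv]
    ring
  unfold FF phi01
  rw [tsum_congr hterm]
  rw [show (∑' k : ℕ, (q:ℂ)^(k*(k-1)) * z^k / (qP (q:ℂ) (q:ℂ) k * qP ((q:ℂ)^ν) (q:ℂ) k))
      = ∑' k : ℕ, uF q ν z k from rfl]
  rw [hu.tsum_eq_zero_add]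
  have hu0 : uF q ν z 0 = 1 := by unfold uF qP; simp
  rw [hu0]
end

section
/- Auxiliary summation for the q-Bessel 𝔉-evaluation: let ρ_k = q^{(ν+k)/2}/(1 − q^{ν+k}) for k ∈ ℤ (with q^{ν+k} ≠ 1 for the indices used). Then for every m ≥ 1 and n ∈ ℤ: ∑_{k_1=n}^{∞} ∑_{k_2=k_1+2}^{∞} ⋯ ∑_{k_m=k_{m−1}+2}^{∞} ρ_{k_1}ρ_{k_1+1} ρ_{k_2}ρ_{k_2+1} ⋯ ρ_{k_m}ρ_{k_m+1} = (q^{m(3m+1)/4} q^{m(ν+n−1)/2}/(q;q)_m) · ρ_n ρ_{n+1} ⋯ ρ_{n+m−1}. -/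
/-!
Let `S_m(n)` be the `m`-fold sum. Splitting off the first index of a chain gives
`S_{m+1}(n) = ∑_{a ≥ n} ρ_a ρ_{a+1} S_m(a+2)`, and `S_0 = 1`, so by induction on `m` everything
reduces to the single sums
`∑_{a ≥ n} q^{ma/2} ρ_a ⋯ ρ_{a+m+1} = q^{((m+1)n+ν+m+1)/2} / (1 - q^{m+1}) · ρ_n ⋯ ρ_{n+m}`.
These telescope: the difference of the right-hand side at `a` and at `a + 1` is the `a`-th summand,
and the right-hand side tends to `0` as `a → ∞`.
Absolute convergence comes from `ρ_{n+j} = O(q^{j/2})`, which dominates the summand of the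
`m`-fold sum by a product of `m` summable one-variable weights.
-/

open Classical

open Filter Topology Asymptotics

theorem hasSum_ite_le_iff {α : Type*} [AddCommMonoid α] [TopologicalSpace α] {f : ℤ → α}
    {n : ℤ} {s : α} :
    HasSum (fun a => if n ≤ a then f a else 0) s ↔ HasSum (fun j : ℕ => f (n + j)) s := by
  have hinj : Function.Injective (fun j : ℕ => n + (j : ℤ)) := fun i j h => by simpa using h
  rw [← hinj.hasSum_iff]
  · simp [Function.comp_def]
  · rintro a ha
    rw [if_neg]
    exact fun hna => ha ⟨(a - n).toNat, by simp [hna]⟩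

theorem summable_pi_prod_of_nonneg {α : Type*} {f : α → ℝ} (hf : 0 ≤ f) (hs : Summable f) :
    ∀ m : ℕ, Summable (fun k : Fin m → α => ∏ i, f (k i))
  | 0 => .of_finite
  | m + 1 => by
    rw [← (Fin.consEquiv fun _ => α).summable_iff]
    simpa [Function.comp_def, Fin.prod_univ_succ] using
      hs.mul_of_nonneg (summable_pi_prod_of_nonneg hf hs m) hf
        fun k => Finset.prod_nonneg fun i _ => hf (k i)

theorem tsum_pi_fin_succ {α E : Type*} [AddCommMonoid E] [TopologicalSpace E] [ContinuousAdd E]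
    [T3Space E] {m : ℕ} {f : (Fin (m + 1) → α) → E} (hf : Summable f)
    (hfib : ∀ a, Summable fun v => f (Fin.cons a v)) :
    ∑' k, f k = ∑' (a) (v), f (Fin.cons a v) := by
  rw [← (Fin.consEquiv fun _ => α).tsum_eq]
  exact ((Fin.consEquiv fun _ => α).summable_iff.mpr hf).tsum_prod' hfib

noncomputable section

namespace QBessel

def rho (q : ℝ) (ν : ℂ) (k : ℤ) : ℂ := (q : ℂ) ^ ((ν + k) / 2) / (1 - (q : ℂ) ^ (ν + k))

def rhoProd (q : ℝ) (ν : ℂ) (M : ℕ) (a : ℤ) : ℂ := ∏ i ∈ Finset.range M, rho q ν (a + i)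

def tailCoeff (q : ℝ) (ν : ℂ) (m : ℕ) (a : ℤ) : ℂ :=
  (q : ℂ) ^ (((m + 1) * a + ν + (m + 1)) / 2) / (1 - (q : ℂ) ^ (m + 1))

def tailSum (q : ℝ) (ν : ℂ) (m : ℕ) (a : ℤ) : ℂ := tailCoeff q ν m a * rhoProd q ν (m + 1) a

def tailTerm (q : ℝ) (ν : ℂ) (m : ℕ) (a : ℤ) : ℂ :=
  (q : ℂ) ^ ((m : ℂ) * a / 2) * rhoProd q ν (m + 2) a

def chainConst (q : ℝ) (ν : ℂ) (m : ℕ) (n : ℤ) : ℂ :=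
  (q : ℂ) ^ ((m * (3 * m + 1) : ℂ) / 4) * (q : ℂ) ^ ((m : ℂ) * (ν + (n : ℂ) - 1) / 2) /
    qP (q : ℂ) (q : ℂ) m

variable {q : ℝ} {ν : ℂ}

theorem rhoProd_add (M N : ℕ) (a : ℤ) :
    rhoProd q ν (M + N) a = rhoProd q ν M a * rhoProd q ν N (a + M) := by
  simp only [rhoProd, Finset.prod_range_add, Nat.cast_add, add_assoc]

theorem rhoProd_one (a : ℤ) : rhoProd q ν 1 a = rho q ν a := by simp [rhoProd]

theorem rhoProd_two (a : ℤ) : rhoProd q ν 2 a = rho q ν a * rho q ν (a + 1) := by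
  simp [rhoProd, Finset.prod_range_succ]

theorem ofReal_cpow_eq_exp (hq : 0 < q) (z : ℂ) : (q : ℂ) ^ z = Complex.exp (Real.log q * z) := by
  rw [Complex.cpow_def_of_ne_zero (by exact_mod_cast hq.ne'), Complex.ofReal_log hq.le]

theorem one_sub_pow_ne_zero (hq0 : 0 < q) (hq1 : q < 1) {k : ℕ} (hk : k ≠ 0) :
    1 - (q : ℂ) ^ k ≠ 0 := by
  rw [sub_ne_zero, ne_comm]
  exact_mod_cast (pow_lt_one₀ hq0.le hq1 hk).ne

theorem tailCoeff_mul_rho_sub (hq0 : 0 < q) (hq1 : q < 1) (m : ℕ) (a : ℤ)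
    (ha : (q : ℂ) ^ (ν + a) ≠ 1) (ham : (q : ℂ) ^ (ν + ↑(a + m + 1)) ≠ 1) :
    tailCoeff q ν m a * rho q ν a - tailCoeff q ν m (a + 1) * rho q ν (a + m + 1) =
      (q : ℂ) ^ ((m : ℂ) * a / 2) * (rho q ν a * rho q ν (a + m + 1)) := by
  have h1 := sub_ne_zero.mpr ha.symm
  have h2 := sub_ne_zero.mpr ham.symm
  have h3 := one_sub_pow_ne_zero hq0 hq1 m.succ_ne_zero
  rw [← Complex.cpow_natCast] at h3
  simp only [tailCoeff, rho, ← Complex.cpow_natCast]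
  push_cast at h1 h2 h3 ⊢
  field_simp
  simp only [ofReal_cpow_eq_exp hq0]
  ring_nf
  simp only [← Complex.exp_add]
  ring_nf

theorem tailSum_sub_tailSum_add_one (hq0 : 0 < q) (hq1 : q < 1) (m : ℕ) (a : ℤ)
    (ha : (q : ℂ) ^ (ν + a) ≠ 1) (ham : (q : ℂ) ^ (ν + ↑(a + m + 1)) ≠ 1) :
    tailSum q ν m a - tailSum q ν m (a + 1) = tailTerm q ν m a := by
  have hfirst : rhoProd q ν (m + 1) a = rho q ν a * rhoProd q ν m (a + 1) := by
    rw [add_comm, rhoProd_add, rhoProd_one, Nat.cast_one]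
  have hlast : rhoProd q ν (m + 1) (a + 1) = rhoProd q ν m (a + 1) * rho q ν (a + m + 1) := by
    rw [rhoProd_add, rhoProd_one, add_right_comm]
  have hboth : rhoProd q ν (m + 2) a =
      rho q ν a * rhoProd q ν m (a + 1) * rho q ν (a + m + 1) := by
    rw [rhoProd_add (m + 1) 1, hfirst, rhoProd_one, Nat.cast_succ, add_assoc]
  rw [tailSum, tailSum, tailTerm, hfirst, hlast, hboth]
  linear_combination rhoProd q ν m (a + 1) * tailCoeff_mul_rho_sub hq0 hq1 m a ha ham

theorem isBigO_cpow_one {ι : Type*} {l : Filter ι} (hq0 : 0 < q) (hq1 : q ≤ 1) {z : ι → ℂ}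
    {b : ℝ} (hb : ∀ i, b ≤ (z i).re) : (fun i => (q : ℂ) ^ z i) =O[l] fun _ => (1 : ℝ) :=
  IsBigO.of_bound (q ^ b) <| Eventually.of_forall fun i => by
    rw [Complex.norm_cpow_eq_rpow_re_of_pos hq0, norm_one, mul_one]
    exact Real.rpow_le_rpow_of_exponent_ge hq0 hq1 (hb i)

theorem rho_isBigO (hq0 : 0 < q) (hq1 : q < 1) (n : ℤ) :
    (fun j : ℕ => rho q ν (n + j)) =O[atTop] fun j => √q ^ j := by
  have hq : (q : ℂ) ≠ 0 := by exact_mod_cast hq0.ne'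
  set w : ℂ := (q : ℂ) ^ ((1 : ℂ) / 2)
  have hw : ‖w‖ = √q := by
    rw [Complex.norm_cpow_eq_rpow_re_of_pos hq0, Real.sqrt_eq_rpow]
    norm_num
  have hnum : ∀ j : ℕ, (q : ℂ) ^ ((ν + ↑(n + j)) / 2) = (q : ℂ) ^ ((ν + n) / 2) * w ^ j := by
    intro j
    rw [← Complex.cpow_nat_mul, ← Complex.cpow_add _ _ hq]
    congr 1
    push_cast
    ring
  have hpow : ∀ j : ℕ, (q : ℂ) ^ (ν + ↑(n + j)) = (q : ℂ) ^ (ν + n) * (q : ℂ) ^ j := by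
    intro j
    rw [← Complex.cpow_natCast, ← Complex.cpow_add _ _ hq]
    push_cast
    ring_nf
  have hden : Tendsto (fun j : ℕ => 1 - (q : ℂ) ^ (ν + ↑(n + j))) atTop (𝓝 1) := by
    have hq' : ‖(q : ℂ)‖ < 1 := by simpa [abs_of_pos hq0] using hq1
    have h := ((tendsto_pow_atTop_nhds_zero_of_norm_lt_one hq').const_mul
      ((q : ℂ) ^ (ν + n))).const_sub 1
    rw [mul_zero, sub_zero] at h
    exact h.congr fun j => by rw [hpow]
  have hnumO : (fun j : ℕ => (q : ℂ) ^ ((ν + ↑(n + j)) / 2)) =O[atTop] fun j => √q ^ j :=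
    IsBigO.of_bound ‖(q : ℂ) ^ ((ν + n) / 2)‖ <| Eventually.of_forall fun j => by
      rw [hnum, norm_mul, norm_pow, hw, Real.norm_of_nonneg (by positivity)]
  simpa [rho, div_eq_mul_inv] using hnumO.mul ((hden.inv₀ one_ne_zero).isBigO_one ℝ)

theorem summable_sqrt_pow (hq1 : q < 1) : Summable fun j : ℕ => √q ^ j :=
  summable_geometric_of_lt_one (Real.sqrt_nonneg q) ((Real.sqrt_lt' one_pos).mpr (by simpa))

theorem tendsto_rhoProd (hq0 : 0 < q) (hq1 : q < 1) (M : ℕ) (n : ℤ) :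
    Tendsto (fun j : ℕ => rhoProd q ν M (n + j)) atTop (𝓝 (0 ^ M)) := by
  simpa [rhoProd, add_right_comm] using tendsto_finsetProd (Finset.range M) fun i _ =>
    (rho_isBigO (ν := ν) hq0 hq1 (n + i)).trans_tendsto (summable_sqrt_pow hq1).tendsto_atTop_zero

theorem rhoProd_isBigO (hq0 : 0 < q) (hq1 : q < 1) (M : ℕ) (n : ℤ) :
    (fun j : ℕ => rhoProd q ν (M + 1) (n + j)) =O[atTop] fun j => √q ^ j := by
  have h : (fun j : ℕ => rho q ν (n + j) * rhoProd q ν M (n + 1 + j)) =O[atTop]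
      fun j => √q ^ j * 1 :=
    (rho_isBigO hq0 hq1 n).mul ((tendsto_rhoProd hq0 hq1 M (n + 1)).isBigO_one ℝ)
  refine h.congr (fun j => ?_) fun j => mul_one _
  rw [add_comm M, rhoProd_add, rhoProd_one, Nat.cast_one, add_right_comm]

theorem tailTerm_isBigO (hq0 : 0 < q) (hq1 : q < 1) (m : ℕ) (n : ℤ) :
    (fun j : ℕ => tailTerm q ν m (n + j)) =O[atTop] fun j => √q ^ j := by
  have hpow : (fun j : ℕ => (q : ℂ) ^ ((m : ℂ) * ↑(n + j) / 2)) =O[atTop] fun _ => (1 : ℝ) :=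
    isBigO_cpow_one hq0 hq1.le (b := m * n / 2) fun j => by
      norm_num
      gcongr
      exact le_add_of_nonneg_right j.cast_nonneg
  exact (hpow.mul (rhoProd_isBigO hq0 hq1 (m + 1) n)).congr (fun j => rfl) fun j => one_mul _

theorem tendsto_tailSum (hq0 : 0 < q) (hq1 : q < 1) (m : ℕ) (n : ℤ) :
    Tendsto (fun N : ℕ => tailSum q ν m (n + N)) atTop (𝓝 0) := by
  have hpow : (fun N : ℕ => (q : ℂ) ^ (((m + 1) * ↑(n + N) + ν + (m + 1)) / 2)) =O[atTop]
      fun _ => (1 : ℝ) :=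
    isBigO_cpow_one hq0 hq1.le (b := ((m + 1) * n + ν.re + (m + 1)) / 2) fun N => by
      norm_num
      gcongr
      exact le_add_of_nonneg_right N.cast_nonneg
  have hcoeff : (fun N : ℕ => tailCoeff q ν m (n + N)) =O[atTop] fun _ => (1 : ℝ) :=
    (hpow.const_mul_left (1 - (q : ℂ) ^ (m + 1))⁻¹).congr_left fun N =>
      (div_eq_inv_mul _ _).symm
  have hprod := tendsto_rhoProd (ν := ν) hq0 hq1 (m + 1) n
  rw [zero_pow m.succ_ne_zero] at hprod
  exact isBoundedUnder_le_mul_tendsto_zero ((isBigO_one_iff ℝ).mp hcoeff) hprod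

theorem hasSum_tailTerm (hq0 : 0 < q) (hq1 : q < 1) (m : ℕ) (n : ℤ)
    (hν : ∀ k : ℤ, n ≤ k → (q : ℂ) ^ (ν + (k : ℂ)) ≠ 1) :
    HasSum (fun j : ℕ => tailTerm q ν m (n + j)) (tailSum q ν m n) := by
  have hsum : Summable fun j : ℕ => tailTerm q ν m (n + j) :=
    summable_of_isBigO_nat (summable_sqrt_pow hq1) (tailTerm_isBigO hq0 hq1 m n)
  have htele : ∀ N : ℕ, ∑ j ∈ Finset.range N, tailTerm q ν m (n + j) =
      tailSum q ν m n - tailSum q ν m (n + N) := by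
    intro N
    have h := Finset.sum_range_sub' (fun j : ℕ => tailSum q ν m (n + j)) N
    simp only [Nat.cast_zero, add_zero] at h
    rw [← h]
    refine Finset.sum_congr rfl fun j _ => ?_
    rw [Nat.cast_succ, ← add_assoc, tailSum_sub_tailSum_add_one hq0 hq1 m (n + j)
      (hν _ (by omega)) (hν _ (by omega))]
  rw [hsum.hasSum_iff_tendsto_nat]
  simpa [htele] using tendsto_const_nhds.sub (tendsto_tailSum (ν := ν) hq0 hq1 m n)

def IsGapChain : (m : ℕ) → ℤ → (Fin m → ℤ) → Prop
  | 0, _, _ => True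
  | m + 1, n, k => n ≤ k 0 ∧ IsGapChain m (k 0 + 2) (Fin.tail k)

def chainTerm (q : ℝ) (ν : ℂ) (m : ℕ) (n : ℤ) (k : Fin m → ℤ) : ℂ :=
  if IsGapChain m n k then ∏ i, rho q ν (k i) * rho q ν (k i + 1) else 0

def gapWeight (q : ℝ) (ν : ℂ) (n a : ℤ) : ℝ :=
  if n ≤ a then ‖rho q ν a * rho q ν (a + 1)‖ else 0

theorem isGapChain_cons {m : ℕ} {n a : ℤ} {v : Fin m → ℤ} :
    IsGapChain (m + 1) n (Fin.cons a v) ↔ n ≤ a ∧ IsGapChain m (a + 2) v := by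
  simp [IsGapChain]

theorem isGapChain_succ_iff {m : ℕ} {n : ℤ} {k : Fin (m + 1) → ℤ} :
    IsGapChain (m + 1) n k ↔
      n ≤ k 0 ∧ ∀ i : Fin (m + 1), ∀ h : (i : ℕ) + 1 < m + 1, k i + 2 ≤ k ⟨(i : ℕ) + 1, h⟩ := by
  induction m generalizing n with
  | zero =>
    simp only [IsGapChain, and_true]
    exact ⟨fun h => ⟨h, fun i hi => absurd hi (by omega)⟩, fun h => h.1⟩
  | succ m ih =>
    rw [IsGapChain, ih]
    conv_rhs => rw [Fin.forall_fin_succ]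
    simp [Fin.tail, Fin.succ_mk]

theorem isGapChain_iff_of_pos {m : ℕ} (hm : 0 < m) {n : ℤ} {k : Fin m → ℤ} :
    IsGapChain m n k ↔
      n ≤ k ⟨0, hm⟩ ∧ ∀ i : Fin m, ∀ h : (i : ℕ) + 1 < m, k i + 2 ≤ k ⟨(i : ℕ) + 1, h⟩ := by
  obtain ⟨m, rfl⟩ := Nat.exists_eq_add_one_of_ne_zero hm.ne'
  exact isGapChain_succ_iff

theorem chainTerm_cons (m : ℕ) (n a : ℤ) (v : Fin m → ℤ) :
    chainTerm q ν (m + 1) n (Fin.cons a v) =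
      if n ≤ a then rho q ν a * rho q ν (a + 1) * chainTerm q ν m (a + 2) v else 0 := by
  by_cases hna : n ≤ a <;>
    simp [chainTerm, isGapChain_cons, hna, Fin.prod_univ_succ, mul_ite]

theorem gapWeight_nonneg (n : ℤ) : 0 ≤ gapWeight q ν n := fun a => by
  unfold gapWeight
  split_ifs <;> positivity

theorem gapWeight_anti {n n' : ℤ} (h : n ≤ n') (a : ℤ) :
    gapWeight q ν n' a ≤ gapWeight q ν n a := by
  unfold gapWeight
  split_ifs <;> first | omega | positivity | rfl

theorem summable_gapWeight (hq0 : 0 < q) (hq1 : q < 1) (n : ℤ) : Summable (gapWeight q ν n) := by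
  have h : Summable fun j : ℕ => ‖rho q ν (n + j) * rho q ν (n + j + 1)‖ := by
    simpa only [← rhoProd_two] using
      summable_of_isBigO_nat (summable_sqrt_pow hq1) (rhoProd_isBigO hq0 hq1 1 n).norm_left
  exact (hasSum_ite_le_iff (f := fun a => ‖rho q ν a * rho q ν (a + 1)‖)).mpr h.hasSum |>.summable

theorem norm_chainTerm_le (m : ℕ) (n : ℤ) (k : Fin m → ℤ) :
    ‖chainTerm q ν m n k‖ ≤ ∏ i, gapWeight q ν n (k i) := by
  induction m generalizing n with
  | zero => simp [chainTerm, IsGapChain]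
  | succ m ih =>
    rw [← Fin.cons_self_tail k, chainTerm_cons, Fin.prod_univ_succ]
    simp only [Fin.cons_zero, Fin.cons_succ]
    split_ifs with hna
    · rw [norm_mul, gapWeight, if_pos hna]
      gcongr
      refine (ih _ _).trans (Finset.prod_le_prod (fun i _ => gapWeight_nonneg _ _) fun i _ => ?_)
      exact gapWeight_anti (by omega) _
    · rw [norm_zero]
      exact mul_nonneg (gapWeight_nonneg n _) (Finset.prod_nonneg fun i _ => gapWeight_nonneg n _)

theorem summable_chainTerm (hq0 : 0 < q) (hq1 : q < 1) (m : ℕ) (n : ℤ) :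
    Summable (chainTerm q ν m n) :=
  .of_norm_bounded
    (summable_pi_prod_of_nonneg (gapWeight_nonneg n) (summable_gapWeight hq0 hq1 n) m)
    (norm_chainTerm_le m n)

theorem chainConst_zero (n : ℤ) : chainConst q ν 0 n = 1 := by
  simp [chainConst, qP]

theorem chainConst_add (hq0 : 0 < q) (m : ℕ) (a n : ℤ) :
    chainConst q ν m (a + n) = (q : ℂ) ^ ((m : ℂ) * a / 2) * chainConst q ν m n := by
  have hq : (q : ℂ) ≠ 0 := by exact_mod_cast hq0.ne'
  have hexp : (m : ℂ) * (ν + ↑(a + n) - 1) / 2 = m * a / 2 + m * (ν + n - 1) / 2 := by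
    push_cast
    ring
  rw [chainConst, chainConst, hexp, Complex.cpow_add _ _ hq]
  ring

theorem chainConst_succ (hq0 : 0 < q) (m : ℕ) (n : ℤ) :
    chainConst q ν (m + 1) n = chainConst q ν m 2 * tailCoeff q ν m n := by
  have hq : (q : ℂ) ≠ 0 := by exact_mod_cast hq0.ne'
  rw [chainConst, chainConst, tailCoeff, qP, qP, Finset.prod_range_succ, pow_succ',
    div_mul_div_comm, mul_assoc, ← Complex.cpow_add _ _ hq, ← Complex.cpow_add _ _ hq,
    ← Complex.cpow_add _ _ hq]
  congr 2
  push_cast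
  ring

theorem tsum_chainTerm (hq0 : 0 < q) (hq1 : q < 1) (m : ℕ) (n : ℤ)
    (hν : ∀ k : ℤ, n ≤ k → (q : ℂ) ^ (ν + (k : ℂ)) ≠ 1) :
    ∑' k, chainTerm q ν m n k = chainConst q ν m n * rhoProd q ν m n := by
  induction m generalizing n with
  | zero => simp [chainTerm, IsGapChain, chainConst_zero, rhoProd]
  | succ m ih =>
    have hstep : ∀ a : ℤ, n ≤ a →
        rho q ν a * rho q ν (a + 1) * ∑' v, chainTerm q ν m (a + 2) v =
          chainConst q ν m 2 * tailTerm q ν m a := fun a ha => by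
      rw [ih (a + 2) fun k hk => hν k (by omega), chainConst_add hq0, tailTerm, add_comm m 2,
        rhoProd_add, rhoProd_two, Nat.cast_ofNat]
      ring
    have hfib : ∀ a : ℤ, Summable fun v => chainTerm q ν (m + 1) n (Fin.cons a v) := fun a => by
      simp only [chainTerm_cons]
      split_ifs
      exacts [(summable_chainTerm hq0 hq1 m (a + 2)).mul_left _, summable_zero]
    calc ∑' k, chainTerm q ν (m + 1) n k
        = ∑' (a) (v), chainTerm q ν (m + 1) n (Fin.cons a v) :=
          tsum_pi_fin_succ (summable_chainTerm hq0 hq1 (m + 1) n) hfib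
      _ = ∑' a, chainConst q ν m 2 * if n ≤ a then tailTerm q ν m a else 0 := by
          refine tsum_congr fun a => ?_
          simp only [chainTerm_cons]
          split_ifs with ha
          · rw [tsum_mul_left, hstep a ha]
          · simp
      _ = chainConst q ν (m + 1) n * rhoProd q ν (m + 1) n := by
          rw [tsum_mul_left, (hasSum_ite_le_iff.mpr (hasSum_tailTerm hq0 hq1 m n hν)).tsum_eq,
            tailSum, chainConst_succ hq0, mul_assoc]

end QBessel

end

open QBessel

theorem rho_multiple_sum (q : ℝ) (hq0 : 0 < q) (hq1 : q < 1) (ν : ℂ) (n : ℤ) (m : ℕ)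
    (hm : 0 < m) (hν : ∀ k : ℤ, n ≤ k → (q : ℂ) ^ (ν + (k : ℂ)) ≠ 1) :
    (∑' k : Fin m → ℤ,
        if n ≤ k ⟨0, hm⟩ ∧ ∀ i : Fin m, ∀ h : (i : ℕ) + 1 < m, k i + 2 ≤ k ⟨(i : ℕ) + 1, h⟩ then
          ∏ i : Fin m,
            (q : ℂ) ^ ((ν + (k i : ℂ)) / 2) / (1 - (q : ℂ) ^ (ν + (k i : ℂ))) *
              ((q : ℂ) ^ ((ν + (k i : ℂ) + 1) / 2) / (1 - (q : ℂ) ^ (ν + (k i : ℂ) + 1)))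
        else 0) =
      (q : ℂ) ^ ((m * (3 * m + 1) : ℂ) / 4) * (q : ℂ) ^ ((m : ℂ) * (ν + (n : ℂ) - 1) / 2) /
          qP (q : ℂ) (q : ℂ) m *
        ∏ i ∈ Finset.range m,
          (q : ℂ) ^ ((ν + (n : ℂ) + i) / 2) / (1 - (q : ℂ) ^ (ν + (n : ℂ) + i)) := by
  refine (tsum_congr fun k => ?_).trans ((tsum_chainTerm hq0 hq1 m n hν).trans ?_)
  · simp only [chainTerm, isGapChain_iff_of_pos hm, rho, Int.cast_add, Int.cast_one, add_assoc]
  · simp only [chainConst, rhoProd, rho, Int.cast_add, Int.cast_natCast, add_assoc]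
end

section
/- For 0 < q < 1 and complex z, ν with q^ν ∉ q^ℤ, the q-hypergeometric functions satisfy: ₀φ₁(;q^{ν+1};q,−q^{ν+1}z) · ₀φ₁(;q^{−ν};q,−q^{−ν}z) − (q^ν z/((1−q^ν)(1−q^{ν+1}))) · ₀φ₁(;q^{ν+2};q,−q^{ν+2}z) · ₀φ₁(;q^{−ν+1};q,−q^{−ν+1}z) = (−z;q)_∞. -/
open Classical

/-
Write `H_b(z) = ₀φ₁(;b;q,-bz)` and, for `b₁ b₂ = q`,
`W(z) = H_{b₁}(z) H_{b₂}(z) + z / ((1 - b₁)(1 - b₂)) · H_{q b₁}(z) H_{q b₂}(z)`.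
The two contiguous relations of `₀φ₁` (a shift of `z` by `q`, and a shift of `b` by `q`)
give the functional equation `W(z) = (1 + z) W(qz)`. Iterating it,
`W(z) = ∏_{j<n} (1 + z q^j) · W(q^n z)`, and `W(q^n z) → W(0) = 1` because `₀φ₁` is an entire
function of its argument for `|q| < 1`. The theorem is the case `b₁ = q^{ν+1}`, `b₂ = q^{-ν}`.
-/

open Filter Topology

lemma qP_succ (a q : ℂ) (k : ℕ) : qP a q (k + 1) = qP a q k * (1 - a * q ^ k) :=
  Finset.prod_range_succ _ _

lemma qP_succ' (a q : ℂ) (k : ℕ) : qP a q (k + 1) = (1 - a) * qP (q * a) q k := by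
  simp only [qP, Finset.prod_range_succ', pow_succ, pow_zero, mul_one]
  rw [mul_comm]
  congr 1
  exact Finset.prod_congr rfl fun j _ => by ring

noncomputable def phi01Coeff (b q : ℂ) (k : ℕ) : ℂ := q ^ (k * (k - 1)) / (qP q q k * qP b q k)

lemma phi01_eq_tsum (b q w : ℂ) : phi01 b q w = ∑' k, phi01Coeff b q k * w ^ k :=
  tsum_congr fun _ => (div_mul_eq_mul_div _ _ _).symm

lemma phi01Coeff_zero (b q : ℂ) : phi01Coeff b q 0 = 1 := by simp [phi01Coeff, qP]

-- No hypotheses: a vanishing factor `1 - b q^k` makes both sides `0` (division by zero).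
lemma phi01Coeff_succ (b q : ℂ) (k : ℕ) :
    phi01Coeff b q (k + 1) =
      phi01Coeff b q k * (q ^ (2 * k) / ((1 - q * q ^ k) * (1 - b * q ^ k))) := by
  have hexp : (k + 1) * (k + 1 - 1) = k * (k - 1) + 2 * k := by
    rcases k with _ | k
    · rfl
    · simp only [Nat.add_sub_cancel]; ring
  rw [phi01Coeff, phi01Coeff, qP_succ, qP_succ, hexp, pow_add, mul_mul_mul_comm,
    mul_div_mul_comm]

lemma phi01_zero (b q : ℂ) : phi01 b q 0 = 1 := by
  rw [phi01_eq_tsum, tsum_eq_single 0 fun k hk => by simp [hk]]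
  simp [phi01Coeff_zero]

section

variable {q : ℂ}

lemma qP_ne_zero {a : ℂ} (ha : ∀ j : ℕ, 1 - a * q ^ j ≠ 0) (k : ℕ) : qP a q k ≠ 0 :=
  Finset.prod_ne_zero_iff.2 fun j _ => ha j

lemma one_sub_mul_pow_ne_zero (hq : ‖q‖ < 1) (k : ℕ) : 1 - q * q ^ k ≠ 0 := by
  rw [← pow_succ', sub_ne_zero]
  refine fun h => (pow_lt_one₀ (norm_nonneg q) hq k.succ_ne_zero).ne' ?_
  rw [← norm_pow, ← h, norm_one]

lemma summable_norm_phi01Coeff_mul_pow (hq : ‖q‖ < 1) (b w : ℂ) :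
    Summable fun k => ‖phi01Coeff b q k * w ^ k‖ := by
  have hpow := tendsto_pow_atTop_nhds_zero_of_norm_lt_one hq
  have hratio : Tendsto (fun k : ℕ => q ^ (2 * k) / ((1 - q * q ^ k) * (1 - b * q ^ k)) * w)
      atTop (𝓝 0) := by
    simp_rw [pow_mul']
    simpa using ((hpow.pow 2).div ((tendsto_const_nhds.sub (hpow.const_mul q)).mul
      (tendsto_const_nhds.sub (hpow.const_mul b))) (by simp)).mul_const w
  refine summable_of_ratio_norm_eventually_le (r := 1 / 2) (by norm_num) ?_
  filter_upwards [hratio.norm.eventually (ge_mem_nhds (by norm_num : ‖(0 : ℂ)‖ < 1 / 2))]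
    with k hk
  rw [norm_norm, norm_norm, phi01Coeff_succ, pow_succ, mul_mul_mul_comm, norm_mul,
    mul_comm (1 / 2 : ℝ)]
  exact mul_le_mul_of_nonneg_left hk (norm_nonneg _)

lemma continuous_phi01 (hq : ‖q‖ < 1) (b : ℂ) : Continuous (phi01 b q) := by
  rw [continuous_iff_continuousAt]
  intro x
  set R : ℝ := ‖x‖ + 1
  have hsum : ContinuousOn (fun w => ∑' k, phi01Coeff b q k * w ^ k) (Metric.ball 0 R) := by
    refine continuousOn_tsum (fun k => by fun_prop)
      (summable_norm_phi01Coeff_mul_pow hq b R) fun k w hw => ?_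
    rw [norm_mul, norm_mul, norm_pow, norm_pow, Complex.norm_real, Real.norm_eq_abs,
      abs_of_pos (by positivity)]
    gcongr
    simpa using (mem_ball_zero_iff.1 hw).le
  simp_rw [funext (phi01_eq_tsum b q)]
  exact hsum.continuousAt (Metric.isOpen_ball.mem_nhds (by simp [R]))

end

section contiguous

variable {q b : ℂ} (hq : ‖q‖ < 1) (hb : ∀ j : ℕ, 1 - b * q ^ j ≠ 0)
include hq hb

lemma one_sub_mul_phi01Coeff (k : ℕ) :
    (1 - b) * phi01Coeff b q k = (1 - b * q ^ k) * phi01Coeff (q * b) q k := by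
  have hshift : qP b q k * (1 - b * q ^ k) = (1 - b) * qP (q * b) q k := by
    rw [← qP_succ, qP_succ']
  have hqb : qP (q * b) q k ≠ 0 :=
    right_ne_zero_of_mul (qP_succ' b q k ▸ qP_ne_zero hb (k + 1))
  have hq' := qP_ne_zero (fun j => one_sub_mul_pow_ne_zero hq j) k
  rw [phi01Coeff, phi01Coeff, ← mul_div_assoc, ← mul_div_assoc,
    div_eq_div_iff (mul_ne_zero hq' (qP_ne_zero hb k)) (mul_ne_zero hq' hqb)]
  linear_combination (-(q ^ (k * (k - 1)) * qP q q k)) * hshift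

lemma phi01_mul_left (w : ℂ) :
    phi01 (q * b) q w = (1 - b) * phi01 b q w + b * phi01 (q * b) q (q * w) := by
  simp only [phi01_eq_tsum]
  rw [← tsum_mul_left, ← tsum_mul_left,
    ← ((summable_norm_phi01Coeff_mul_pow hq b w).of_norm.mul_left _).tsum_add
      ((summable_norm_phi01Coeff_mul_pow hq (q * b) (q * w)).of_norm.mul_left _)]
  refine tsum_congr fun k => ?_
  linear_combination (-w ^ k) * one_sub_mul_phi01Coeff hq hb k

lemma phi01_sub_phi01_mul (w : ℂ) :
    phi01 b q w - phi01 b q (q * w) = w / (1 - b) * phi01 (q * b) q (q ^ 2 * w) := by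
  have S1 := (summable_norm_phi01Coeff_mul_pow hq b w).of_norm
  have S2 := (summable_norm_phi01Coeff_mul_pow hq b (q * w)).of_norm
  simp only [phi01_eq_tsum]
  rw [← S1.tsum_sub S2, (S1.sub S2).tsum_eq_zero_add, ← tsum_mul_left]
  simp only [pow_zero, mul_one, sub_self, zero_add]
  refine tsum_congr fun k => ?_
  have hb0 : 1 - b ≠ 0 := by simpa using hb 0
  have hc : phi01Coeff b q k = (1 - b * q ^ k) * phi01Coeff (q * b) q k / (1 - b) := by
    rw [← one_sub_mul_phi01Coeff hq hb k, mul_div_cancel_left₀ _ hb0]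
  have hqk : 1 - q ^ k * q ≠ 0 := by rw [mul_comm]; exact one_sub_mul_pow_ne_zero hq k
  have hbk := hb k
  calc phi01Coeff b q (k + 1) * w ^ (k + 1) - phi01Coeff b q (k + 1) * (q * w) ^ (k + 1)
      = phi01Coeff b q (k + 1) * (1 - q * q ^ k) * w ^ (k + 1) := by ring
    _ = w / (1 - b) * (phi01Coeff (q * b) q k * (q ^ 2 * w) ^ k) := by
      rw [phi01Coeff_succ, hc]
      field_simp
      ring

lemma phi01_neg_mul (z : ℂ) :
    phi01 b q (-b * z) =
      phi01 b q (-b * (q * z)) - b * z / (1 - b) * phi01 (q * b) q (-(q * b) * (q * z)) := by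
  have h := phi01_sub_phi01_mul hq hb (-b * z)
  rw [show q * (-b * z) = -b * (q * z) by ring,
    show q ^ 2 * (-b * z) = -(q * b) * (q * z) by ring] at h
  linear_combination h

lemma phi01_mul_left_neg_mul (z : ℂ) :
    phi01 (q * b) q (-(q * b) * z) =
      (1 - b) * phi01 b q (-b * (q * z)) + b * phi01 (q * b) q (-(q * b) * (q * z)) := by
  rw [phi01_mul_left hq hb, show q * (-(q * b) * z) = -(q * b) * (q * z) by ring,
    show -(q * b) * z = -b * (q * z) by ring]

end contiguous

noncomputable def phi01Wronskian (q b₁ b₂ z : ℂ) : ℂ :=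
  phi01 b₁ q (-b₁ * z) * phi01 b₂ q (-b₂ * z) +
    z / ((1 - b₁) * (1 - b₂)) * (phi01 (q * b₁) q (-(q * b₁) * z) * phi01 (q * b₂) q (-(q * b₂) * z))

section wronskian

variable {q b₁ b₂ : ℂ}

lemma phi01Wronskian_eq_one_add_mul (hq : ‖q‖ < 1) (h₁ : ∀ j : ℕ, 1 - b₁ * q ^ j ≠ 0)
    (h₂ : ∀ j : ℕ, 1 - b₂ * q ^ j ≠ 0) (hb : b₁ * b₂ = q) (z : ℂ) :
    phi01Wronskian q b₁ b₂ z = (1 + z) * phi01Wronskian q b₁ b₂ (q * z) := by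
  have e₁ : 1 - b₁ ≠ 0 := by simpa using h₁ 0
  have e₂ : 1 - b₂ ≠ 0 := by simpa using h₂ 0
  rw [phi01Wronskian, phi01Wronskian, phi01_neg_mul hq h₁ z, phi01_neg_mul hq h₂ z,
    phi01_mul_left_neg_mul hq h₁ z, phi01_mul_left_neg_mul hq h₂ z]
  field_simp
  rw [← hb]
  ring

lemma phi01Wronskian_eq_prod_mul (hq : ‖q‖ < 1) (h₁ : ∀ j : ℕ, 1 - b₁ * q ^ j ≠ 0)
    (h₂ : ∀ j : ℕ, 1 - b₂ * q ^ j ≠ 0) (hb : b₁ * b₂ = q) (z : ℂ) (n : ℕ) :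
    phi01Wronskian q b₁ b₂ z =
      (∏ j ∈ Finset.range n, (1 + z * q ^ j)) * phi01Wronskian q b₁ b₂ (q ^ n * z) := by
  induction n with
  | zero => simp
  | succ n ih =>
    rw [ih, phi01Wronskian_eq_one_add_mul hq h₁ h₂ hb (q ^ n * z), Finset.prod_range_succ,
      ← mul_assoc q, ← pow_succ']
    ring

lemma tendsto_phi01Wronskian_pow_mul (hq : ‖q‖ < 1) (b₁ b₂ z : ℂ) :
    Tendsto (fun n : ℕ => phi01Wronskian q b₁ b₂ (q ^ n * z)) atTop (𝓝 1) := by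
  have hcont : Continuous (phi01Wronskian q b₁ b₂) := by
    have := continuous_phi01 hq
    unfold phi01Wronskian
    fun_prop
  have hlim : Tendsto (fun n : ℕ => q ^ n * z) atTop (𝓝 0) := by
    simpa using (tendsto_pow_atTop_nhds_zero_of_norm_lt_one hq).mul_const z
  have hzero : phi01Wronskian q b₁ b₂ 0 = 1 := by simp [phi01Wronskian, phi01_zero]
  exact hzero ▸ (hcont.tendsto 0).comp hlim

lemma multipliable_one_add_mul_pow (hq : ‖q‖ < 1) (z : ℂ) :
    Multipliable fun j : ℕ => 1 + z * q ^ j := by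
  refine multipliable_one_add_of_summable ?_
  simpa [norm_mul, norm_pow] using (summable_geometric_of_lt_one (norm_nonneg q) hq).mul_left ‖z‖

theorem phi01Wronskian_eq_tprod (hq : ‖q‖ < 1) (h₁ : ∀ j : ℕ, 1 - b₁ * q ^ j ≠ 0)
    (h₂ : ∀ j : ℕ, 1 - b₂ * q ^ j ≠ 0) (hb : b₁ * b₂ = q) (z : ℂ) :
    phi01Wronskian q b₁ b₂ z = ∏' j : ℕ, (1 + z * q ^ j) := by
  have hlim := ((multipliable_one_add_mul_pow hq z).tendsto_prod_tprod_nat).mul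
    (tendsto_phi01Wronskian_pow_mul hq b₁ b₂ z)
  rw [mul_one] at hlim
  exact tendsto_nhds_unique
    (tendsto_const_nhds.congr (phi01Wronskian_eq_prod_mul hq h₁ h₂ hb z)) hlim

end wronskian

theorem phi01_wronskian_of_ne_zpow {q a : ℂ} (hq : ‖q‖ < 1) (ha₀ : a ≠ 0)
    (ha : ∀ m : ℤ, a * q ^ m ≠ 1) (z : ℂ) :
    phi01 (a * q) q (-(a * q) * z) * phi01 a⁻¹ q (-a⁻¹ * z) -
        a * z / ((1 - a) * (1 - a * q)) * phi01 (q * (a * q)) q (-(q * (a * q)) * z) *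
          phi01 (q * a⁻¹) q (-(q * a⁻¹) * z) =
      ∏' j : ℕ, (1 + z * q ^ j) := by
  have h₁ : ∀ j : ℕ, 1 - a * q * q ^ j ≠ 0 := fun j => by
    rw [sub_ne_zero, ne_comm, mul_assoc, ← pow_succ', ← zpow_natCast]
    exact ha _
  have h₂ : ∀ j : ℕ, 1 - a⁻¹ * q ^ j ≠ 0 := fun j h => ha (-j) <| by
    rw [zpow_neg, zpow_natCast, ← (inv_mul_eq_one₀ ha₀).1 (sub_eq_zero.1 h).symm,
      mul_inv_cancel₀ ha₀]
  have hb : a * q * a⁻¹ = q := by field_simp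
  have hcoeff : z / ((1 - a * q) * (1 - a⁻¹)) = -(a * z / ((1 - a) * (1 - a * q))) := by
    have : 1 - a ≠ 0 := sub_ne_zero.2 (by simpa [eq_comm] using ha 0)
    have : a - 1 ≠ 0 := sub_ne_zero.2 (by simpa using ha 0)
    have : 1 - a * q ≠ 0 := by simpa using h₁ 0
    field_simp
    ring
  rw [← phi01Wronskian_eq_tprod hq h₁ h₂ hb z, phi01Wronskian, hcoeff]
  ring

theorem phi01_wronskian (q : ℝ) (hq0 : 0 < q) (hq1 : q < 1) (ν z : ℂ)
    (hν : ∀ k : ℤ, (q : ℂ) ^ ν ≠ (q : ℂ) ^ (k : ℂ)) :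
    phi01 ((q : ℂ) ^ (ν + 1)) (q : ℂ) (-(q : ℂ) ^ (ν + 1) * z) *
          phi01 ((q : ℂ) ^ (-ν)) (q : ℂ) (-(q : ℂ) ^ (-ν) * z) -
        (q : ℂ) ^ ν * z / ((1 - (q : ℂ) ^ ν) * (1 - (q : ℂ) ^ (ν + 1))) *
          phi01 ((q : ℂ) ^ (ν + 2)) (q : ℂ) (-(q : ℂ) ^ (ν + 2) * z) *
          phi01 ((q : ℂ) ^ (-ν + 1)) (q : ℂ) (-(q : ℂ) ^ (-ν + 1) * z) =
      ∏' j : ℕ, (1 + z * (q : ℂ) ^ j) := by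
  have hq : ‖(q : ℂ)‖ < 1 := by rwa [Complex.norm_real, Real.norm_of_nonneg hq0.le]
  have hq₀ : (q : ℂ) ≠ 0 := Complex.ofReal_ne_zero.2 hq0.ne'
  have hcpow (w : ℂ) : (q : ℂ) ^ (w + 1) = (q : ℂ) * (q : ℂ) ^ w := by
    rw [Complex.cpow_add _ _ hq₀, Complex.cpow_one, mul_comm]
  have ha : ∀ m : ℤ, (q : ℂ) ^ ν * (q : ℂ) ^ m ≠ 1 := fun m h =>
    hν (-m) (by rw [Complex.cpow_intCast, zpow_neg]; exact eq_inv_of_mul_eq_one_left h)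
  rw [show ν + 2 = ν + 1 + 1 by ring, hcpow (ν + 1), hcpow ν, hcpow (-ν), Complex.cpow_neg,
    mul_comm (q : ℂ) ((q : ℂ) ^ ν)]
  exact phi01_wronskian_of_ne_zpow hq (Complex.cpow_ne_zero_iff.2 (Or.inl hq₀)) ha z
end

section
/- For 0 < q < 1 and complex z: ∑_{k=0}^{∞} q^{k(k−1)/2} z^k/(q;q)_k = (−z;q)_∞ (Euler's identity), and consequently lim_{M→∞} ∑_{k=0}^{∞} q^{k(k−1)} (−q^{−M} q^{1/2} w²)^k / ((q;q)_k (q^{−M};q)_k) = ∑_{k=0}^{∞} q^{k²/2} w^{2k}/(q;q)_k = (−q^{1/2}w²;q)_∞, the limit taken over positive integers M. -/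
/-!
Write `F(z) = ∑ₖ tₖ` with `tₖ = q^{k(k-1)/2} zᵏ / (q;q)ₖ`. The terms satisfy
`(1 - q^{k+1}) t_{k+1} = qᵏ z tₖ`, which gives `F(z) = (1 + z) F(qz)` and, iterating,
`F(z) = (∏_{j<n} (1 + z qʲ)) F(qⁿ z)`; as `n → ∞`, `F(qⁿ z) → F(0) = 1` by dominated convergence.

For the limit, invert the q-Pochhammer symbol:
`(b;q)ₖ = (-b)ᵏ q^{k(k-1)/2} ∏_{j<k} (1 - (b qʲ)⁻¹)`. With `b = q^{-M}` the `k`-th term of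
`₀φ₁(;b;q,-bz)` becomes the `k`-th term of `F(z)` divided by `∏_{j<k} (1 - q^{M-j})`. These
products tend to `1` as `M → ∞` and, when nonzero (`k ≤ M`), are at least `exp(-1/(1-|q|)²)`,
so dominated convergence applies again. Finally `q^{k(k-1)/2} (√q w²)ᵏ = √q^{k²} w^{2k}`
identifies both series in `w` with `F(√q w²)`.
-/

open Classical

open Filter Finset Topology

lemma sq_pow_triangle_mul_pow {M : Type*} [Monoid M] (s : M) (k : ℕ) :
    (s ^ 2) ^ (k * (k - 1) / 2) * s ^ k = s ^ (k ^ 2) := by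
  rw [← pow_mul, ← pow_add, Nat.mul_div_cancel' (Nat.even_mul_pred_self k).two_dvd]
  congr 1
  cases k <;> simp; ring

lemma exp_neg_div_le_one_sub {t a : ℝ} (ht : 0 ≤ t) (hta : t ≤ a) (ha : a < 1) :
    Real.exp (-t / (1 - a)) ≤ 1 - t := by
  have hu : 0 ≤ t / (1 - a) := div_nonneg ht (by linarith)
  have hu' : t / (1 - a) * (1 - a) = t := div_mul_cancel₀ t (by linarith)
  rw [neg_div, Real.exp_neg, inv_le_comm₀ (Real.exp_pos _) (by linarith), inv_eq_one_div,
    div_le_iff₀ (by linarith)]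
  nlinarith [Real.add_one_le_exp (t / (1 - a)), mul_nonneg hu (sub_nonneg.2 hta)]

lemma exp_neg_div_le_norm_prod_one_sub {𝕜 ι : Type*} [NormedField 𝕜] {s : Finset ι} {x : ι → 𝕜}
    {a : ℝ} (ha : a < 1) (hx : ∀ i ∈ s, ‖x i‖ ≤ a) :
    Real.exp (-(∑ i ∈ s, ‖x i‖) / (1 - a)) ≤ ‖∏ i ∈ s, (1 - x i)‖ := by
  rw [norm_prod, neg_div, sum_div, ← sum_neg_distrib, Real.exp_sum]
  refine prod_le_prod (fun i _ => (Real.exp_pos _).le) fun i hi => ?_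
  calc Real.exp (-(‖x i‖ / (1 - a))) ≤ 1 - ‖x i‖ := by
        rw [← neg_div]; exact exp_neg_div_le_one_sub (norm_nonneg _) (hx i hi) ha
    _ = ‖(1 : 𝕜)‖ - ‖x i‖ := by rw [norm_one]
    _ ≤ ‖1 - x i‖ := norm_sub_norm_le _ _

lemma tendsto_tsum_div_of_tendsto_one {𝕜 ι α : Type*} [NormedField 𝕜] [CompleteSpace 𝕜]
    {l : Filter α} {a : ι → 𝕜} (ha : Summable (‖a ·‖)) {D : α → ι → 𝕜}
    (hD : ∀ k, Tendsto (D · k) l (𝓝 1)) {c : ℝ} (hc : 0 < c)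
    (hDc : ∀ M k, D M k = 0 ∨ c ≤ ‖D M k‖) :
    Tendsto (fun M => ∑' k, a k / D M k) l (𝓝 (∑' k, a k)) := by
  refine tendsto_tsum_of_dominated_convergence (bound := fun k => ‖a k‖ / c) (ha.div_const c)
    (fun k => by simpa [Pi.div_def] using tendsto_const_nhds.div (hD k) one_ne_zero)
    (Eventually.of_forall fun M k => ?_)
  rcases hDc M k with h | h
  · rw [h, div_zero, norm_zero]; positivity
  · rw [norm_div]; gcongr

noncomputable def eulerTerm (q z : ℂ) (k : ℕ) : ℂ := q ^ (k * (k - 1) / 2) * z ^ k / qP q q k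

noncomputable def eulerSeries (q z : ℂ) : ℂ := ∑' k, eulerTerm q z k

lemma eulerTerm_sq_mul (s z : ℂ) (k : ℕ) :
    eulerTerm (s ^ 2) (s * z) k = s ^ (k ^ 2) * z ^ k / qP (s ^ 2) (s ^ 2) k := by
  rw [eulerTerm, mul_pow, ← mul_assoc, sq_pow_triangle_mul_pow]

lemma eulerTerm_zero (q z : ℂ) : eulerTerm q z 0 = 1 := by simp [eulerTerm, qP]

lemma eulerTerm_mul (q c z : ℂ) (k : ℕ) : eulerTerm q (c * z) k = c ^ k * eulerTerm q z k := by
  simp only [eulerTerm, mul_pow]; ring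

lemma one_sub_pow_succ_ne_zero {q : ℂ} (hq : ‖q‖ < 1) (k : ℕ) : 1 - q ^ (k + 1) ≠ 0 := by
  refine sub_ne_zero.2 fun h => (pow_lt_one₀ (norm_nonneg q) hq k.succ_ne_zero).ne ?_
  rw [← norm_pow, ← h, norm_one]

lemma qP_self_ne_zero {q : ℂ} (hq : ‖q‖ < 1) (k : ℕ) : qP q q k ≠ 0 :=
  prod_ne_zero_iff.2 fun j _ => by rw [← pow_succ']; exact one_sub_pow_succ_ne_zero hq j

lemma eulerTerm_succ {q : ℂ} (hq : ‖q‖ < 1) (z : ℂ) (k : ℕ) :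
    (1 - q ^ (k + 1)) * eulerTerm q z (k + 1) = q ^ k * z * eulerTerm q z k := by
  have h := qP_self_ne_zero hq k
  have h' := one_sub_pow_succ_ne_zero hq k
  rw [eulerTerm, eulerTerm, qP, prod_range_succ, ← qP, Nat.triangle_succ, ← pow_succ']
  field_simp
  ring

lemma summable_norm_eulerTerm {q : ℂ} (hq : ‖q‖ < 1) (z : ℂ) : Summable (‖eulerTerm q z ·‖) := by
  have hpow := tendsto_pow_atTop_nhds_zero_of_norm_lt_one hq
  have hratio : Tendsto (fun k : ℕ => ‖q ^ k * z / (1 - q ^ (k + 1))‖) atTop (𝓝 0) := by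
    simpa using ((hpow.mul_const z).div (tendsto_const_nhds.sub
      (hpow.comp (tendsto_add_atTop_nat 1))) (by simp)).norm
  refine summable_of_ratio_norm_eventually_le (r := 1 / 2) (by norm_num) ?_
  filter_upwards [hratio.eventually_le_const (by norm_num : (0 : ℝ) < 1 / 2)] with k hk
  have hsucc : eulerTerm q z (k + 1) = q ^ k * z / (1 - q ^ (k + 1)) * eulerTerm q z k := by
    rw [div_mul_eq_mul_div, eq_div_iff (one_sub_pow_succ_ne_zero hq k), mul_comm]
    exact eulerTerm_succ hq z k
  rw [norm_norm, norm_norm, hsucc, norm_mul]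
  exact mul_le_mul_of_nonneg_right hk (norm_nonneg _)

lemma eulerSeries_eq_one_add_mul {q : ℂ} (hq : ‖q‖ < 1) (z : ℂ) :
    eulerSeries q z = (1 + z) * eulerSeries q (q * z) := by
  have hS := (summable_norm_eulerTerm hq (q * z)).of_norm.hasSum
  have hrec (k : ℕ) :
      eulerTerm q (q * z) (k + 1) + z * eulerTerm q (q * z) k = eulerTerm q z (k + 1) := by
    rw [eulerTerm_mul, eulerTerm_mul]
    linear_combination -eulerTerm_succ hq z k
  have h := ((hasSum_nat_add_iff' 1).2 hS).add (hS.mul_left z)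
  simp only [hrec] at h
  have := (hasSum_nat_add_iff (f := eulerTerm q z) 1).1 h
  simp only [range_one, sum_singleton, eulerTerm_zero] at this
  rw [eulerSeries, this.tsum_eq, eulerSeries]
  ring

lemma eulerSeries_eq_prod_mul {q : ℂ} (hq : ‖q‖ < 1) (z : ℂ) (n : ℕ) :
    eulerSeries q z = (∏ j ∈ range n, (1 + z * q ^ j)) * eulerSeries q (q ^ n * z) := by
  induction n with
  | zero => simp
  | succ n ih =>
    rw [ih, prod_range_succ, eulerSeries_eq_one_add_mul hq (q ^ n * z), ← mul_assoc q,
      ← pow_succ']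
    ring

lemma tendsto_eulerSeries_pow_mul {q : ℂ} (hq : ‖q‖ < 1) (z : ℂ) :
    Tendsto (fun n : ℕ => eulerSeries q (q ^ n * z)) atTop (𝓝 1) := by
  have hpow := tendsto_pow_atTop_nhds_zero_of_norm_lt_one hq
  have h := tendsto_tsum_of_dominated_convergence (f := fun n k => eulerTerm q (q ^ n * z) k)
    (g := fun k => 0 ^ k * eulerTerm q z k) (summable_norm_eulerTerm hq z)
    (fun k => by simpa only [eulerTerm_mul] using (hpow.pow k).mul_const _)
    (Eventually.of_forall fun n k => ?_)
  · rwa [tsum_eq_single 0 fun k hk => by rw [zero_pow hk, zero_mul], pow_zero, one_mul,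
      eulerTerm_zero] at h
  · rw [eulerTerm_mul, norm_mul, norm_pow, norm_pow]
    exact mul_le_of_le_one_left (norm_nonneg _)
      (pow_le_one₀ (by positivity) (pow_le_one₀ (norm_nonneg _) hq.le))

theorem eulerSeries_eq_tprod {q : ℂ} (hq : ‖q‖ < 1) (z : ℂ) :
    eulerSeries q z = ∏' j : ℕ, (1 + z * q ^ j) := by
  have hmul : Multipliable fun j : ℕ => 1 + z * q ^ j :=
    multipliable_one_add_of_summable <| by
      simpa only [norm_mul, norm_pow] using
        (summable_geometric_of_lt_one (norm_nonneg q) hq).mul_left ‖z‖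
  have h := hmul.hasProd.tendsto_prod_nat.mul (tendsto_eulerSeries_pow_mul hq z)
  rw [mul_one] at h
  exact tendsto_nhds_unique tendsto_const_nhds
    (h.congr fun n => (eulerSeries_eq_prod_mul hq z n).symm)

lemma qP_eq_neg_pow_mul_prod_one_sub_inv {b q : ℂ} (hb : b ≠ 0) (hq : q ≠ 0) (k : ℕ) :
    qP b q k = (-b) ^ k * q ^ (k * (k - 1) / 2) * ∏ j ∈ range k, (1 - (b * q ^ j)⁻¹) := by
  have hfac (j : ℕ) : 1 - b * q ^ j = -b * q ^ j * (1 - (b * q ^ j)⁻¹) := by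
    field_simp
    ring
  rw [qP, prod_congr rfl fun j _ => hfac j, prod_mul_distrib, prod_mul_distrib, prod_const,
    card_range, prod_pow_eq_pow_sum, sum_range_id]

lemma prod_one_sub_zpow_sub_eq_qP {q : ℂ} (hq : q ≠ 0) (M k : ℕ) :
    ∏ j ∈ range k, (1 - q ^ ((j : ℤ) - M)) = qP (q ^ (-(M : ℤ))) q k :=
  prod_congr rfl fun j _ => by rw [← zpow_natCast, ← zpow_add₀ hq, neg_add_eq_sub]

lemma phi01_term_eq_eulerTerm_div {b q : ℂ} (hb : b ≠ 0) (hq : q ≠ 0) (z : ℂ) (k : ℕ) :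
    q ^ (k * (k - 1)) * (-b * z) ^ k / (qP q q k * qP b q k) =
      eulerTerm q z k / ∏ j ∈ range k, (1 - (b * q ^ j)⁻¹) := by
  have hpow : q ^ (k * (k - 1)) = q ^ (k * (k - 1) / 2) * q ^ (k * (k - 1) / 2) := by
    rw [← pow_add, ← two_mul, Nat.mul_div_cancel' (Nat.even_mul_pred_self k).two_dvd]
  have hc : (-b) ^ k * q ^ (k * (k - 1) / 2) ≠ 0 :=
    mul_ne_zero (pow_ne_zero _ (neg_ne_zero.2 hb)) (pow_ne_zero _ hq)
  rw [qP_eq_neg_pow_mul_prod_one_sub_inv hb hq, eulerTerm, div_div, hpow, mul_pow]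
  conv_rhs => rw [← mul_div_mul_right _ _ hc]
  ring

lemma tendsto_prod_one_sub_inv_zpow_neg_mul_pow {q : ℂ} (hq : ‖q‖ < 1) (k : ℕ) :
    Tendsto (fun M : ℕ => ∏ j ∈ range k, (1 - (q ^ (-(M : ℤ)) * q ^ j)⁻¹)) atTop (𝓝 1) := by
  have hpow := tendsto_pow_atTop_nhds_zero_of_norm_lt_one hq
  have hfactor (j : ℕ) :
      Tendsto (fun M : ℕ => 1 - (q ^ (-(M : ℤ)) * q ^ j)⁻¹) atTop (𝓝 1) := by
    simp only [mul_inv, zpow_neg, inv_inv, zpow_natCast]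
    simpa using tendsto_const_nhds.sub (hpow.mul_const (q ^ j)⁻¹)
  simpa using tendsto_finsetProd (range k) fun j _ => hfactor j

lemma exp_le_norm_prod_one_sub_inv_zpow_neg_mul_pow {q : ℂ} (hq : ‖q‖ < 1) (hq0 : q ≠ 0)
    {M k : ℕ} (hkM : k ≤ M) :
    Real.exp (-((1 - ‖q‖) ^ 2)⁻¹) ≤ ‖∏ j ∈ range k, (1 - (q ^ (-(M : ℤ)) * q ^ j)⁻¹)‖ := by
  have hnorm : ∀ j ∈ range k, ‖(q ^ (-(M : ℤ)) * q ^ j)⁻¹‖ = ‖q‖ ^ (M - j) := fun j hj => by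
    rw [norm_inv, norm_mul, norm_zpow, norm_pow, zpow_neg, zpow_natCast, ← div_eq_inv_mul,
      inv_div, div_eq_mul_inv, ← pow_sub₀ _ (norm_ne_zero_iff.2 hq0) (by simp at hj; omega)]
  have h1 : 0 < 1 - ‖q‖ := by linarith
  have hsum : ∑ j ∈ range k, ‖(q ^ (-(M : ℤ)) * q ^ j)⁻¹‖ ≤ (1 - ‖q‖)⁻¹ :=
    calc ∑ j ∈ range k, ‖(q ^ (-(M : ℤ)) * q ^ j)⁻¹‖ = ∑ j ∈ range k, ‖q‖ ^ (M - j) :=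
          sum_congr rfl hnorm
      _ ≤ ∑ j ∈ range k, ‖q‖ ^ (k - 1 - j) :=
          sum_le_sum fun j hj => pow_le_pow_of_le_one (norm_nonneg _) hq.le (by omega)
      _ = ∑ j ∈ range k, ‖q‖ ^ j := sum_range_reflect (‖q‖ ^ ·) k
      _ ≤ (1 - ‖q‖)⁻¹ := by
          simpa [← range_eq_Ico] using
            geom_sum_Ico_le_of_lt_one (m := 0) (n := k) (norm_nonneg q) hq
  refine le_trans ?_ (exp_neg_div_le_norm_prod_one_sub hq fun j hj => ?_)
  · rw [Real.exp_le_exp, neg_div, neg_le_neg_iff, sq, mul_inv, ← div_eq_mul_inv]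
    exact div_le_div_of_nonneg_right hsum h1.le
  · rw [hnorm j hj]
    exact pow_le_of_le_one (norm_nonneg _) hq.le (by simp at hj; omega)

theorem tendsto_phi01_zpow_neg {q : ℂ} (hq : ‖q‖ < 1) (hq0 : q ≠ 0) (z : ℂ) :
    Tendsto (fun M : ℕ => phi01 (q ^ (-(M : ℤ))) q (-q ^ (-(M : ℤ)) * z)) atTop
      (𝓝 (eulerSeries q z)) := by
  simp only [phi01, phi01_term_eq_eulerTerm_div (zpow_ne_zero _ hq0) hq0]
  refine tendsto_tsum_div_of_tendsto_one (summable_norm_eulerTerm hq z)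
    (tendsto_prod_one_sub_inv_zpow_neg_mul_pow hq)
    (Real.exp_pos (-((1 - ‖q‖) ^ 2)⁻¹)) fun M k => ?_
  rcases le_or_gt k M with hkM | hMk
  · exact .inr (exp_le_norm_prod_one_sub_inv_zpow_neg_mul_pow hq hq0 hkM)
  · -- the factor `j = M` vanishes, so the term is `x / 0 = 0`: the series terminates
    refine .inl (prod_eq_zero (mem_range.2 hMk) ?_)
    rw [zpow_neg, zpow_natCast, inv_mul_cancel₀ (pow_ne_zero _ hq0), inv_one, sub_self]

theorem euler_identity_and_limit (q : ℝ) (hq0 : 0 < q) (hq1 : q < 1) (w : ℂ) :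
    (∀ z : ℂ, ∑' k : ℕ, (q : ℂ) ^ (k * (k - 1) / 2) * z ^ k / qP (q : ℂ) (q : ℂ) k
        = ∏' j : ℕ, (1 + z * (q : ℂ) ^ j)) ∧
      Filter.Tendsto (fun M : ℕ =>
          ∑' k : ℕ, (q : ℂ) ^ (k * (k - 1)) *
              (-(q : ℂ) ^ (-(M : ℤ)) * (Real.sqrt q : ℂ) * w ^ 2) ^ k /
            (qP (q : ℂ) (q : ℂ) k * ∏ j ∈ Finset.range k, (1 - (q : ℂ) ^ ((j : ℤ) - (M : ℤ)))))
        Filter.atTop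
        (nhds (∑' k : ℕ, (Real.sqrt q : ℂ) ^ (k ^ 2) * w ^ (2 * k) / qP (q : ℂ) (q : ℂ) k)) ∧
      (∑' k : ℕ, (Real.sqrt q : ℂ) ^ (k ^ 2) * w ^ (2 * k) / qP (q : ℂ) (q : ℂ) k
        = ∏' j : ℕ, (1 + (Real.sqrt q : ℂ) * w ^ 2 * (q : ℂ) ^ j)) := by
  have hq : ‖(q : ℂ)‖ < 1 := by rwa [Complex.norm_real, Real.norm_of_nonneg hq0.le]
  have hq0' : (q : ℂ) ≠ 0 := by exact_mod_cast hq0.ne'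
  have hsq : (Real.sqrt q : ℂ) ^ 2 = q := by rw [← Complex.ofReal_pow, Real.sq_sqrt hq0.le]
  have hseries : ∑' k : ℕ, (Real.sqrt q : ℂ) ^ (k ^ 2) * w ^ (2 * k) / qP (q : ℂ) (q : ℂ) k =
      eulerSeries q (Real.sqrt q * w ^ 2) := by
    rw [eulerSeries, ← hsq]
    exact tsum_congr fun k => by rw [eulerTerm_sq_mul, pow_mul]
  refine ⟨eulerSeries_eq_tprod hq, ?_, hseries.trans (eulerSeries_eq_tprod hq _)⟩
  rw [hseries]
  simpa only [phi01, prod_one_sub_zpow_sub_eq_qP hq0', mul_assoc] using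
    tendsto_phi01_zpow_neg hq hq0' (Real.sqrt q * w ^ 2)
end
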